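/- arXiv:1907.13421 — 6 statements merged into one kernel-verified Lean document; each statement's English description precedes it below -/
import Mathlib

section
/- Backward-induction representation of the optimal control limit: if l_{N+1} = 0, l_N = c·v_{N+1}, and l_n = c·v_{n+1} + E([l_{n+1} - Y_{n+1}]^+ | F_n) for 0 ≤ n ≤ N-1, then for every 0 ≤ n ≤ N, l_n = c·v_{n+1} + E( ∑_{m=n+1}^{N} 1{B_{m,n+1}} · (c·v_{m+1} - Y_m) | F_n ) almost surely, where B_{m,n+1} = {Y_k < l_k for all n+1 ≤ k ≤ m}. -/
open MeasureTheory Finset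

/-!
Write `S_n` for the sum in the representation. By backward induction, `l_{n+1} - Y_{n+1}` is a
version of `E[X | ℱ_{n+1}]` with `X = c v_{n+2} - Y_{n+1} + S_{n+1}`. On the `ℱ_{n+1}`-measurable
event where this version is positive the indicator can be pulled inside `E[· | ℱ_{n+1}]`, and the
tower property gives `E[(l_{n+1} - Y_{n+1})⁺ | ℱ_n] = E[1_B X | ℱ_n]` with
`B = {Y_{n+1} < l_{n+1}}`; finally `1_B X = S_n` pointwise, because `B_{m,n+1} = B ∩ B_{m,n+2}`.
As `l` is only determined almost everywhere, `B` need not be measurable: it is only a.e. equal to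
the event defined through the conditional expectation.
-/

namespace ControlLimit

variable {Ω : Type*}

/-- The event `B_{m,n}` of the paper. -/
def belowLimit (Y l : ℕ → Ω → ℝ) (n m : ℕ) : Set Ω :=
  {ω | ∀ k ∈ Icc n m, Y k ω < l k ω}

noncomputable def continuationSum (N : ℕ) (c : ℝ) (Y v l : ℕ → Ω → ℝ) (n : ℕ) (ω : Ω) : ℝ :=
  ∑ m ∈ Icc (n + 1) N,
    (belowLimit Y l (n + 1) m).indicator (fun _ => (1 : ℝ)) ω * (c * v (m + 1) ω - Y m ω)

theorem belowLimit_self (Y l : ℕ → Ω → ℝ) (n : ℕ) :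
    belowLimit Y l n n = {ω | Y n ω < l n ω} := by
  simp [belowLimit]

theorem belowLimit_eq_inter {n m : ℕ} (Y l : ℕ → Ω → ℝ) (h : n ≤ m) :
    belowLimit Y l n m = {ω | Y n ω < l n ω} ∩ belowLimit Y l (n + 1) m := by
  ext ω
  simp [belowLimit, ← insert_Icc_add_one_left_eq_Icc h]

theorem continuationSum_eq_indicator {N n : ℕ} (c : ℝ) (Y v l : ℕ → Ω → ℝ) (hn : n < N) :
    continuationSum N c Y v l n = {ω | Y (n + 1) ω < l (n + 1) ω}.indicator
      fun ω => c * v (n + 2) ω - Y (n + 1) ω + continuationSum N c Y v l (n + 1) ω := by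
  ext ω
  rw [continuationSum, ← insert_Icc_add_one_left_eq_Icc hn, sum_insert (by simp),
    belowLimit_self]
  by_cases hω : Y (n + 1) ω < l (n + 1) ω
  · have hω' : ω ∈ {ω | Y (n + 1) ω < l (n + 1) ω} := hω
    simp only [Set.indicator_of_mem hω', one_mul, continuationSum]
    congr 1
    refine sum_congr rfl fun m hm => ?_
    rw [belowLimit_eq_inter Y l (by simp only [mem_Icc] at hm; omega)]
    by_cases hm' : ω ∈ belowLimit Y l (n + 1 + 1) m <;> simp [hω, hm']
  · have hω' : ω ∉ {ω | Y (n + 1) ω < l (n + 1) ω} := hω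
    rw [Set.indicator_of_notMem hω', Set.indicator_of_notMem hω', zero_mul, zero_add]
    refine sum_eq_zero fun m hm => ?_
    rw [belowLimit_eq_inter Y l (by simp only [mem_Icc] at hm; omega)]
    simp [hω]

@[simp]
theorem continuationSum_self (N : ℕ) (c : ℝ) (Y v l : ℕ → Ω → ℝ) :
    continuationSum N c Y v l N = 0 := by
  ext ω
  simp [continuationSum]

theorem nullMeasurableSet_belowLimit [MeasurableSpace Ω] {μ : Measure Ω} {Y l : ℕ → Ω → ℝ}
    {n m : ℕ} (hY : ∀ k ∈ Icc n m, AEMeasurable (Y k) μ)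
    (hl : ∀ k ∈ Icc n m, AEMeasurable (l k) μ) :
    NullMeasurableSet (belowLimit Y l n m) μ := by
  have : belowLimit Y l n m = ⋂ k ∈ Icc n m, {ω | Y k ω < l k ω} := by
    ext ω; simp [belowLimit]
  rw [this]
  exact Finset.nullMeasurableSet_biInter _ fun k hk => nullMeasurableSet_lt (hY k hk) (hl k hk)

theorem integrable_continuationSum [MeasurableSpace Ω] {μ : Measure Ω} {N n : ℕ} {c : ℝ}
    {Y v l : ℕ → Ω → ℝ} (hY : ∀ k, Integrable (Y k) μ) (hv : ∀ k, Integrable (v k) μ)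
    (hl : ∀ k ∈ Icc (n + 1) N, AEMeasurable (l k) μ) :
    Integrable (continuationSum N c Y v l n) μ := by
  refine integrable_finsetSum _ fun m hm => ?_
  have hB : NullMeasurableSet (belowLimit Y l (n + 1) m) μ :=
    nullMeasurableSet_belowLimit (fun k _ => (hY k).aemeasurable)
      fun k hk => hl k (by simp only [mem_Icc] at hk hm ⊢; omega)
  convert (((hv (m + 1)).const_mul c).sub (hY m)).indicator₀ hB using 1
  ext ω
  by_cases hω : ω ∈ belowLimit Y l (n + 1) m <;> simp [hω]

theorem condExp_max_zero_ae_eq_condExp_indicator {m m' m0 : MeasurableSpace Ω} {μ : Measure Ω}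
    (hm : m ≤ m') (hm' : m' ≤ m0) [SigmaFinite (μ.trim hm')] {X Z : Ω → ℝ}
    (hX : Integrable X μ) (hZ : Z =ᵐ[μ] μ[X | m']) :
    μ[fun ω => max (Z ω) 0 | m] =ᵐ[μ] μ[{ω | 0 < Z ω}.indicator X | m] := by
  set A := {ω | 0 < μ[X | m'] ω}
  have hA : MeasurableSet[m'] A :=
    measurableSet_lt stronglyMeasurable_const.measurable stronglyMeasurable_condExp.measurable
  have hZA : {ω | 0 < Z ω} =ᵐ[μ] A := by
    filter_upwards [hZ] with ω hω
    change (0 < Z ω) = (0 < μ[X | m'] ω)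
    rw [hω]
  have hmax : (fun ω => max (Z ω) 0) =ᵐ[μ] A.indicator (μ[X | m']) := by
    filter_upwards [hZ] with ω hω
    rw [hω]
    by_cases hω' : ω ∈ A
    · rw [Set.indicator_of_mem hω', max_eq_left (le_of_lt hω')]
    · rw [Set.indicator_of_notMem hω', max_eq_right (not_lt.1 hω')]
  calc μ[fun ω => max (Z ω) 0 | m] =ᵐ[μ] μ[A.indicator (μ[X | m']) | m] := condExp_congr_ae hmax
    _ =ᵐ[μ] μ[μ[A.indicator X | m'] | m] := condExp_congr_ae (condExp_indicator hX hA).symm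
    _ =ᵐ[μ] μ[A.indicator X | m] := condExp_condExp_of_le hm hm'
    _ =ᵐ[μ] μ[{ω | 0 < Z ω}.indicator X | m] :=
      condExp_congr_ae (indicator_ae_eq_of_ae_eq_set hZA.symm)

end ControlLimit

open ControlLimit in
theorem control_limit_backward_representation_general
    {Ω : Type*} {m0 : MeasurableSpace Ω} (μ : Measure Ω) [IsProbabilityMeasure μ]
    (N : ℕ) (ℱ : ℕ → MeasurableSpace Ω) (hmono : Monotone ℱ) (hle : ∀ n, ℱ n ≤ m0)
    (Y v : ℕ → Ω → ℝ)
    (hYint : ∀ n, Integrable (Y n) μ)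
    (hYmeas : ∀ n, Measurable[ℱ n] (Y n))
    (hvint : ∀ n, Integrable (v n) μ)
    (hvmeas : ∀ k, Measurable[ℱ (k - 1)] (v k))
    (c : ℝ) (l : ℕ → Ω → ℝ)
    (hlN : l N = fun ω => c * v (N + 1) ω)
    (hlrec : ∀ n < N, l n =ᵐ[μ] fun ω =>
      c * v (n + 1) ω + (μ[fun ω' => max (l (n + 1) ω' - Y (n + 1) ω') 0 | ℱ n]) ω) :
    ∀ n ≤ N, l n =ᵐ[μ] fun ω =>
      c * v (n + 1) ω +
        (μ[fun ω' => ∑ m ∈ Finset.Icc (n + 1) N,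
            (Set.indicator {ω'' | ∀ k ∈ Finset.Icc (n + 1) m, Y k ω'' < l k ω''}
              (fun _ => (1 : ℝ)) ω') * (c * v (m + 1) ω' - Y m ω') | ℱ n]) ω := by
  have hl_int : ∀ k ≤ N, Integrable (l k) μ := by
    intro k hk
    rcases hk.lt_or_eq with hk | rfl
    · exact (((hvint _).const_mul c).add integrable_condExp).congr (hlrec k hk).symm
    · exact hlN ▸ (hvint _).const_mul c
  have hS_int : ∀ n, Integrable (continuationSum N c Y v l n) μ := fun n =>
    integrable_continuationSum hYint hvint fun k hk => (hl_int k (mem_Icc.1 hk).2).aemeasurable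
  intro n hn
  change l n =ᵐ[μ] fun ω => c * v (n + 1) ω + μ[continuationSum N c Y v l n | ℱ n] ω
  induction hn using Nat.decreasingInduction with
  | self => simp [hlN]
  | of_succ n hn ih =>
    set F : Ω → ℝ := fun ω => c * v (n + 2) ω - Y (n + 1) ω
    have hF_meas : StronglyMeasurable[ℱ (n + 1)] F :=
      ((measurable_const.mul (hvmeas (n + 2))).sub (hYmeas (n + 1))).stronglyMeasurable
    have hF_int : Integrable F μ := ((hvint _).const_mul c).sub (hYint _)
    have hZ : (fun ω => l (n + 1) ω - Y (n + 1) ω) =ᵐ[μ]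
        μ[F + continuationSum N c Y v l (n + 1) | ℱ (n + 1)] := by
      filter_upwards [ih, condExp_add hF_int (hS_int (n + 1)) (ℱ (n + 1))] with ω h1 h2
      rw [h1, h2, Pi.add_apply, condExp_of_stronglyMeasurable (hle _) hF_meas hF_int]
      ring
    filter_upwards [hlrec n hn, condExp_max_zero_ae_eq_condExp_indicator (hmono n.le_succ)
      (hle _) (hF_int.add (hS_int _)) hZ] with ω h1 h2
    rw [h1, h2, continuationSum_eq_indicator c Y v l hn]
    simp_rw [sub_pos]
    rfl

/-- Backward-induction representation of the optimal control limit: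
if `l_{N+1} = 0`, `l_N = c·v_{N+1}`, and `l_n = c·v_{n+1} + E([l_{n+1} - Y_{n+1}]⁺ | F_n)`
for `0 ≤ n ≤ N-1`, then for every `0 ≤ n ≤ N`,
`l_n = c·v_{n+1} + E(∑_{m=n+1}^{N} 1{B_{m,n+1}}·(c·v_{m+1} - Y_m) | F_n)` a.s.,
where `B_{m,n+1} = {Y_k < l_k for all n+1 ≤ k ≤ m}`. -/
theorem control_limit_backward_representation
    {Ω : Type*} {m0 : MeasurableSpace Ω} (μ : Measure Ω) [IsProbabilityMeasure μ]
    (N : ℕ) (ℱ : ℕ → MeasurableSpace Ω) (hmono : Monotone ℱ) (hle : ∀ n, ℱ n ≤ m0)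
    (Y v : ℕ → Ω → ℝ)
    (hYnn : ∀ n ω, 0 ≤ Y n ω) (hYint : ∀ n, Integrable (Y n) μ)
    (hYmeas : ∀ n, Measurable[ℱ n] (Y n))
    (hvnn : ∀ n ω, 0 ≤ v n ω) (hvint : ∀ n, Integrable (v n) μ)
    (hvmeas : ∀ k, Measurable[ℱ (k - 1)] (v k))
    (c : ℝ) (hc : 0 < c) (l : ℕ → Ω → ℝ)
    (hlN1 : l (N + 1) = fun _ => 0)
    (hlN : l N = fun ω => c * v (N + 1) ω)
    (hlrec : ∀ n < N, l n =ᵐ[μ] fun ω =>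
      c * v (n + 1) ω + (μ[fun ω' => max (l (n + 1) ω' - Y (n + 1) ω') 0 | ℱ n]) ω) :
    ∀ n ≤ N, l n =ᵐ[μ] fun ω =>
      c * v (n + 1) ω +
        (μ[fun ω' => ∑ m ∈ Finset.Icc (n + 1) N,
            (Set.indicator {ω'' | ∀ k ∈ Finset.Icc (n + 1) m, Y k ω'' < l k ω''}
              (fun _ => (1 : ℝ)) ω') * (c * v (m + 1) ω' - Y m ω') | ℱ n]) ω :=
  control_limit_backward_representation_general μ N ℱ hmono hle Y v hYint hYmeas hvint hvmeas c l
    hlN hlrec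
end

section
/- Supermartingale-type inequality for arbitrary stopping rules: with the recursively defined control limits l_n, for any stopping time T adapted to the filtration (i.e., {T > m} ∈ F_m) with values in {1,...,N+1}, and for every 0 ≤ n ≤ N, E( ∑_{m=n+1}^{N} 1{T > m}·(c·v_{m+1} - Y_m) | F_n ) ≤ (l_n - c·v_{n+1}) · 1{T > n} almost surely. -/
/-!
Backward induction on `n`. With `Z m = c v_{m+1} - Y_m` and `g n = l_n - c v_{n+1}` the control
limits become `g N = 0`, `g n = E[(Z_{n+1} + g_{n+1})⁺ | F_n]`. Splitting off the first,
`F_{n+1}`-measurable, term of the sum, the induction hypothesis bounds its conditional expectation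
given `F_{n+1}` by `1{T > n+1} (Z_{n+1} + g_{n+1}) ≤ 1{T > n} (Z_{n+1} + g_{n+1})⁺`; conditioning
on `F_n` and pulling out the `F_n`-measurable indicator `1{T > n}` leaves `1{T > n} g n`.
-/

open MeasureTheory Finset

noncomputable def costToGo {Ω : Type*} (T : Ω → ℕ) (Z : ℕ → Ω → ℝ) (n N : ℕ) : Ω → ℝ :=
  ∑ m ∈ Icc (n + 1) N, {ω | m < T ω}.indicator (Z m)

section

variable {Ω : Type*} {m0 : MeasurableSpace Ω} {μ : Measure Ω} {ℱ : Filtration ℕ m0}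
  {T : Ω → ℕ} {Z g : ℕ → Ω → ℝ} {n N : ℕ}

lemma costToGo_self : costToGo T Z N N = 0 := by
  simp [costToGo]

lemma costToGo_eq_indicator_add (hn : n < N) :
    costToGo T Z n N = {ω | n + 1 < T ω}.indicator (Z (n + 1)) + costToGo T Z (n + 1) N := by
  rw [costToGo, ← insert_Icc_add_one_left_eq_Icc (by omega : n + 1 ≤ N), sum_insert (by simp)]
  rfl

lemma integrable_costToGo (hZ : ∀ m, Integrable (Z m) μ)
    (hT : ∀ m, MeasurableSet {ω | m < T ω}) : Integrable (costToGo T Z n N) μ :=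
  integrable_finsetSum' _ fun m _ => (hZ m).indicator (hT m)

lemma indicator_add_le_indicator_max {s t : Set Ω} (hst : s ⊆ t) (a b : Ω → ℝ) :
    s.indicator a + s.indicator b ≤ t.indicator fun ω => max (a ω + b ω) 0 := by
  rw [← Set.indicator_add']
  calc s.indicator (a + b) ≤ s.indicator fun ω => max (a ω + b ω) 0 :=
        fun _ => Set.indicator_le_indicator (le_max_left _ _)
    _ ≤ t.indicator fun ω => max (a ω + b ω) 0 :=
        Set.indicator_le_indicator_of_subset hst fun _ => le_max_right _ _

variable [IsFiniteMeasure μ]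

lemma condExp_costToGo_le_of_succ (hZ : Adapted ℱ Z) (hZint : ∀ m, Integrable (Z m) μ)
    (hT : ∀ m, MeasurableSet[ℱ m] {ω | m < T ω}) (hn : n < N)
    (ih : μ[costToGo T Z (n + 1) N | ℱ (n + 1)] ≤ᵐ[μ] {ω | n + 1 < T ω}.indicator (g (n + 1))) :
    μ[costToGo T Z n N | ℱ (n + 1)]
      ≤ᵐ[μ] {ω | n < T ω}.indicator fun ω => max (Z (n + 1) ω + g (n + 1) ω) 0 := by
  have hT' m : MeasurableSet {ω | m < T ω} := ℱ.le m _ (hT m)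
  have hstep_int := (hZint (n + 1)).indicator (hT' (n + 1))
  have hstep : μ[{ω | n + 1 < T ω}.indicator (Z (n + 1)) | ℱ (n + 1)]
      = {ω | n + 1 < T ω}.indicator (Z (n + 1)) :=
    condExp_of_stronglyMeasurable (ℱ.le _)
      ((hZ (n + 1)).stronglyMeasurable.indicator (hT (n + 1))) hstep_int
  rw [costToGo_eq_indicator_add hn]
  filter_upwards [condExp_add hstep_int (integrable_costToGo hZint hT') (ℱ (n + 1)), ih]
    with ω hadd hih
  have hsub : {ω | n + 1 < T ω} ⊆ {ω | n < T ω} := fun _ h => Nat.lt_of_succ_lt h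
  rw [hadd, Pi.add_apply, hstep]
  exact (add_le_add_right hih _).trans (indicator_add_le_indicator_max hsub _ _ ω)

theorem condExp_costToGo_le (hZ : Adapted ℱ Z) (hZint : ∀ m, Integrable (Z m) μ)
    (hT : ∀ m, MeasurableSet[ℱ m] {ω | m < T ω}) (hgN : g N = 0)
    (hg : ∀ n < N, g n =ᵐ[μ] μ[fun ω => max (Z (n + 1) ω + g (n + 1) ω) 0 | ℱ n])
    (hn : n ≤ N) : μ[costToGo T Z n N | ℱ n] ≤ᵐ[μ] {ω | n < T ω}.indicator (g n) := by
  induction hn using Nat.decreasingInduction with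
  | self => simp only [costToGo_self, condExp_zero, hgN, Set.indicator_zero']; rfl
  | of_succ n hn ih =>
    have hg_int : Integrable (g (n + 1)) μ := by
      obtain hlt | rfl : n + 1 < N ∨ n + 1 = N := by omega
      · exact integrable_condExp.congr (hg _ hlt).symm
      · rw [hgN]
        exact integrable_zero _ _ _
    have hpos_int : Integrable (fun ω => max (Z (n + 1) ω + g (n + 1) ω) 0) μ :=
      ((hZint _).add hg_int).pos_part
    calc μ[costToGo T Z n N | ℱ n]
        =ᵐ[μ] μ[μ[costToGo T Z n N | ℱ (n + 1)] | ℱ n] :=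
          (condExp_condExp_of_le (ℱ.mono n.le_succ) (ℱ.le _)).symm
      _ ≤ᵐ[μ] μ[{ω | n < T ω}.indicator fun ω => max (Z (n + 1) ω + g (n + 1) ω) 0 | ℱ n] :=
          condExp_mono integrable_condExp (hpos_int.indicator (ℱ.le n _ (hT n)))
            (condExp_costToGo_le_of_succ hZ hZint hT hn ih)
      _ =ᵐ[μ] {ω | n < T ω}.indicator (μ[fun ω => max (Z (n + 1) ω + g (n + 1) ω) 0 | ℱ n]) :=
          condExp_indicator hpos_int (hT n)
      _ =ᵐ[μ] {ω | n < T ω}.indicator (g n) := by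
          filter_upwards [hg n hn] with ω hω
          simp only [Set.indicator_apply, hω]

end

theorem stopping_rule_supermartingale_inequality_general
    {Ω : Type*} {m0 : MeasurableSpace Ω} (μ : Measure Ω) [IsProbabilityMeasure μ]
    (N : ℕ) (ℱ : ℕ → MeasurableSpace Ω) (hmono : Monotone ℱ) (hle : ∀ n, ℱ n ≤ m0)
    (Y v : ℕ → Ω → ℝ)
    (hYint : ∀ n, Integrable (Y n) μ)
    (hYmeas : ∀ n, Measurable[ℱ n] (Y n))
    (hvint : ∀ n, Integrable (v n) μ)
    (hvmeas : ∀ k, Measurable[ℱ (k - 1)] (v k))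
    (c : ℝ) (l : ℕ → Ω → ℝ)
    (hlN : l N = fun ω => c * v (N + 1) ω)
    (hlrec : ∀ n < N, l n =ᵐ[μ] fun ω =>
      c * v (n + 1) ω + (μ[fun ω' => max (l (n + 1) ω' - Y (n + 1) ω') 0 | ℱ n]) ω)
    (T : Ω → ℕ)
    (hTstop : ∀ m, MeasurableSet[ℱ m] {ω | m < T ω}) :
    ∀ n ≤ N,
      (μ[fun ω => ∑ m ∈ Finset.Icc (n + 1) N,
          (if m < T ω then (1 : ℝ) else 0) * (c * v (m + 1) ω - Y m ω) | ℱ n])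
        ≤ᵐ[μ] fun ω => (l n ω - c * v (n + 1) ω) * (if n < T ω then (1 : ℝ) else 0) := by
  let 𝔽 : Filtration ℕ m0 := ⟨ℱ, hmono, hle⟩
  let Z m ω : ℝ := c * v (m + 1) ω - Y m ω
  let g n ω : ℝ := l n ω - c * v (n + 1) ω
  have hZ : Adapted 𝔽 Z := fun m => ((hvmeas (m + 1)).const_mul c).sub (hYmeas m)
  have hZint m : Integrable (Z m) μ := ((hvint (m + 1)).const_mul c).sub (hYint m)
  have hgN : g N = 0 := by funext ω; simp [g, hlN]
  have hg n (hn : n < N) :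
      g n =ᵐ[μ] μ[fun ω => max (Z (n + 1) ω + g (n + 1) ω) 0 | 𝔽 n] := by
    have hZg : (fun ω => max (Z (n + 1) ω + g (n + 1) ω) 0)
        = fun ω => max (l (n + 1) ω - Y (n + 1) ω) 0 := by
      funext ω; congr 1; ring
    filter_upwards [hlrec n hn] with ω hω
    rw [hZg]
    simp only [g, hω]
    ring
  intro n hn
  convert condExp_costToGo_le hZ hZint hTstop hgN hg hn using 1
  · congr 1
    funext ω
    simp [costToGo, Z, Set.indicator_apply]
  · funext ω
    simp [g, Set.indicator_apply]

/-- Supermartingale-type inequality for arbitrary stopping rules: with the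
recursively defined control limits `l_n`, for any stopping time `T` (i.e. `{T > m} ∈ F_m`)
with values in `{1,...,N+1}`, and every `0 ≤ n ≤ N`,
`E(∑_{m=n+1}^{N} 1{T > m}·(c·v_{m+1} - Y_m) | F_n) ≤ (l_n - c·v_{n+1})·1{T > n}` a.s. -/
theorem stopping_rule_supermartingale_inequality
    {Ω : Type*} {m0 : MeasurableSpace Ω} (μ : Measure Ω) [IsProbabilityMeasure μ]
    (N : ℕ) (ℱ : ℕ → MeasurableSpace Ω) (hmono : Monotone ℱ) (hle : ∀ n, ℱ n ≤ m0)
    (Y v : ℕ → Ω → ℝ)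
    (hYnn : ∀ n ω, 0 ≤ Y n ω) (hYint : ∀ n, Integrable (Y n) μ)
    (hYmeas : ∀ n, Measurable[ℱ n] (Y n))
    (hvnn : ∀ n ω, 0 ≤ v n ω) (hvint : ∀ n, Integrable (v n) μ)
    (hvmeas : ∀ k, Measurable[ℱ (k - 1)] (v k))
    (c : ℝ) (hc : 0 < c) (l : ℕ → Ω → ℝ)
    (hlN1 : l (N + 1) = fun _ => 0)
    (hlN : l N = fun ω => c * v (N + 1) ω)
    (hlrec : ∀ n < N, l n =ᵐ[μ] fun ω =>
      c * v (n + 1) ω + (μ[fun ω' => max (l (n + 1) ω' - Y (n + 1) ω') 0 | ℱ n]) ω)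
    (T : Ω → ℕ)
    (hTstop : ∀ m, MeasurableSet[ℱ m] {ω | m < T ω})
    (hT : ∀ ω, 1 ≤ T ω ∧ T ω ≤ N + 1) :
    ∀ n ≤ N,
      (μ[fun ω => ∑ m ∈ Finset.Icc (n + 1) N,
          (if m < T ω then (1 : ℝ) else 0) * (c * v (m + 1) ω - Y m ω) | ℱ n])
        ≤ᵐ[μ] fun ω => (l n ω - c * v (n + 1) ω) * (if n < T ω then (1 : ℝ) else 0) :=
  stopping_rule_supermartingale_inequality_general μ N ℱ hmono hle Y v hYint hYmeas hvint hvmeas c l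
    hlN hlrec T hTstop
end

section
/- With the recursively defined control limits, for every 0 ≤ n ≤ N: E( ∑_{m=n+1}^{N} 1{B_{m,n+1}}·(c·v_{m+1} - Y_m) | F_n ) = E( [l_{n+1} - Y_{n+1}]^+ | F_n ) almost surely, where B_{m,n+1} = {Y_k < l_k for all n+1 ≤ k ≤ m} and l_{N+1} = 0. -/
/-!
Write `S n` for the sum on the left. Splitting off its first term gives
`S n = 1{Y (n+1) < l (n+1)} * (c v (n+2) - Y (n+1) + S (n+1))`, where the indicator and
`c v (n+2) - Y (n+1)` are `ℱ (n+1)`-measurable. By downward induction,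
`E[S (n+1) | ℱ (n+1)] = E[(l (n+2) - Y (n+2))⁺ | ℱ (n+1)] = l (n+1) - c v (n+2)`, hence
`E[S n | ℱ (n+1)] = 1{Y (n+1) < l (n+1)} (l (n+1) - Y (n+1)) = (l (n+1) - Y (n+1))⁺`,
and the tower property conditions this down to `ℱ n`.
The control limits are only determined up to null sets, so the events `{Y k < l k}` are merely
a.e. measurable and the argument works with a.e. strongly measurable indicators.
-/

open MeasureTheory Finset

section

variable {Ω : Type*} {m0 : MeasurableSpace Ω}

theorem indicator_lt_mul_sub_eq_max (f g : Ω → ℝ) (ω : Ω) :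
    {ω | f ω < g ω}.indicator (fun _ => (1 : ℝ)) ω * (g ω - f ω) = max (g ω - f ω) 0 := by
  by_cases h : f ω < g ω
  · simp [h, h.le]
  · simp [h, not_lt.mp h]

theorem MeasureTheory.AEStronglyMeasurable.indicator_setOf_lt {μ : Measure Ω}
    {m : MeasurableSpace Ω} {f g : Ω → ℝ} (hf : AEStronglyMeasurable[m] f μ)
    (hg : AEStronglyMeasurable[m] g μ) :
    AEStronglyMeasurable[m] ({ω | f ω < g ω}.indicator fun _ => (1 : ℝ)) μ :=
  ⟨{ω | hf.mk f ω < hg.mk g ω}.indicator fun _ => (1 : ℝ),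
    stronglyMeasurable_const.indicator
      (measurableSet_lt hf.stronglyMeasurable_mk.measurable hg.stronglyMeasurable_mk.measurable),
    by filter_upwards [hf.ae_eq_mk, hg.ae_eq_mk] with ω h1 h2; simp [Set.indicator_apply, h1, h2]⟩

theorem condExp_max_sub_eq_zero {μ : Measure Ω} {m : MeasurableSpace Ω} {f g : Ω → ℝ}
    (h : ∀ᵐ ω ∂μ, f ω ≤ g ω) : μ[fun ω => max (f ω - g ω) 0 | m] =ᵐ[μ] 0 := by
  calc μ[fun ω => max (f ω - g ω) 0 | m]
      =ᵐ[μ] μ[0 | m] := condExp_congr_ae (h.mono fun ω hω => max_eq_right (sub_nonpos.2 hω))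
    _ = 0 := condExp_zero

noncomputable def sumWhileBelow (Y l a : ℕ → Ω → ℝ) (N n : ℕ) (ω : Ω) : ℝ :=
  ∑ m ∈ Icc (n + 1) N,
    {ω' | ∀ k ∈ Icc (n + 1) m, Y k ω' < l k ω'}.indicator (fun _ => (1 : ℝ)) ω * (a m ω - Y m ω)

section sumWhileBelow

variable {μ : Measure Ω} {Y l a : ℕ → Ω → ℝ} {N : ℕ}

theorem sumWhileBelow_of_le {n : ℕ} (h : N ≤ n) : sumWhileBelow Y l a N n = 0 := by
  funext ω
  simp [sumWhileBelow, Icc_eq_empty_of_lt (Nat.lt_succ_of_le h)]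

theorem sumWhileBelow_eq_indicator_mul {n : ℕ} (hn : n < N) (ω : Ω) :
    sumWhileBelow Y l a N n ω = {ω | Y (n + 1) ω < l (n + 1) ω}.indicator (fun _ => (1 : ℝ)) ω *
      (a (n + 1) ω - Y (n + 1) ω + sumWhileBelow Y l a N (n + 1) ω) := by
  by_cases h : ω ∈ {ω | Y (n + 1) ω < l (n + 1) ω}
  · rw [Set.indicator_of_mem h, one_mul, sumWhileBelow, ← insert_Icc_add_one_left_eq_Icc hn,
      sum_insert (by simp)]
    congr 1
    · simp_all
    · refine sum_congr rfl fun m hm => ?_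
      have hB : (∀ k ∈ Icc (n + 1) m, Y k ω < l k ω) ↔
          ∀ k ∈ Icc (n + 1 + 1) m, Y k ω < l k ω := by
        rw [← insert_Icc_add_one_left_eq_Icc (by simp only [mem_Icc] at hm; omega),
          forall_mem_insert]
        exact and_iff_right h
      simp only [Set.indicator_apply, Set.mem_ofPred_eq, hB]
  · rw [Set.indicator_of_notMem h, zero_mul, sumWhileBelow]
    refine sum_eq_zero fun m hm => ?_
    rw [Set.indicator_of_notMem, zero_mul]
    exact fun hB => h (hB (n + 1) (by simp only [mem_Icc] at hm ⊢; omega))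

theorem integrable_sumWhileBelow (hY : ∀ k, Integrable (Y k) μ) (ha : ∀ k, Integrable (a k) μ)
    (hl : ∀ n < N, AEStronglyMeasurable (l (n + 1)) μ) (n : ℕ) :
    Integrable (sumWhileBelow Y l a N n) μ := by
  obtain hn | hn := le_total N n
  · rw [sumWhileBelow_of_le hn]
    exact integrable_zero _ _ _
  induction hn using Nat.decreasingInduction with
  | self => rw [sumWhileBelow_of_le le_rfl]; exact integrable_zero _ _ _
  | of_succ k hk ih =>
    rw [funext (sumWhileBelow_eq_indicator_mul hk)]
    refine (((ha _).sub (hY _)).add ih).bdd_mul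
      ((hY _).aestronglyMeasurable.indicator_setOf_lt (hl k hk)) (c := 1) (ae_of_all _ fun ω => ?_)
    by_cases h : ω ∈ {ω | Y (k + 1) ω < l (k + 1) ω} <;> simp [h]

variable [IsFiniteMeasure μ] {𝔽 : Filtration ℕ m0}

theorem condExp_sumWhileBelow_succ (hYm : Adapted 𝔽 Y) (ham : Adapted 𝔽 a)
    (hY : ∀ k, Integrable (Y k) μ) (ha : ∀ k, Integrable (a k) μ)
    (hl : ∀ n < N, AEStronglyMeasurable[𝔽 (n + 1)] (l (n + 1)) μ) {k : ℕ} (hk : k < N) :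
    μ[sumWhileBelow Y l a N k | 𝔽 (k + 1)] =ᵐ[μ] fun ω =>
      {ω | Y (k + 1) ω < l (k + 1) ω}.indicator (fun _ => (1 : ℝ)) ω *
        (a (k + 1) ω - Y (k + 1) ω + μ[sumWhileBelow Y l a N (k + 1) | 𝔽 (k + 1)] ω) := by
  set I := {ω | Y (k + 1) ω < l (k + 1) ω}.indicator fun _ => (1 : ℝ)
  set g := fun ω => a (k + 1) ω - Y (k + 1) ω
  have hg : Integrable g μ := (ha _).sub (hY _)
  have hS := integrable_sumWhileBelow hY ha fun n hn => (hl n hn).mono (𝔽.le _)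
  have hsplit : sumWhileBelow Y l a N k = I * (g + sumWhileBelow Y l a N (k + 1)) :=
    funext (sumWhileBelow_eq_indicator_mul hk)
  have hg_cond : μ[g | 𝔽 (k + 1)] = g :=
    condExp_of_stronglyMeasurable (𝔽.le _) ((ham (k + 1)).sub (hYm (k + 1))).stronglyMeasurable hg
  rw [hsplit]
  filter_upwards [condExp_mul_of_aestronglyMeasurable_left
      ((hYm _).aestronglyMeasurable.indicator_setOf_lt (hl k hk)) (hsplit ▸ hS k)
      (hg.add (hS (k + 1))),
    condExp_add hg (hS (k + 1)) (𝔽 (k + 1))] with ω hmul hadd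
  rw [hmul, Pi.mul_apply, hadd, Pi.add_apply, hg_cond]

theorem condExp_sumWhileBelow_ae_eq (hYm : Adapted 𝔽 Y) (ham : Adapted 𝔽 a)
    (hY : ∀ k, Integrable (Y k) μ) (ha : ∀ k, Integrable (a k) μ)
    (hrec : ∀ n < N, l (n + 1) =ᵐ[μ] fun ω => a (n + 1) ω +
      μ[fun ω' => max (l (n + 2) ω' - Y (n + 2) ω') 0 | 𝔽 (n + 1)] ω)
    (hterm : ∀ᵐ ω ∂μ, l (N + 1) ω ≤ Y (N + 1) ω) {n : ℕ} (hn : n ≤ N) :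
    μ[sumWhileBelow Y l a N n | 𝔽 n] =ᵐ[μ]
      μ[fun ω => max (l (n + 1) ω - Y (n + 1) ω) 0 | 𝔽 n] := by
  have hl : ∀ n < N, AEStronglyMeasurable[𝔽 (n + 1)] (l (n + 1)) μ := fun n hn =>
    ((ham (n + 1)).stronglyMeasurable.aestronglyMeasurable.add
      stronglyMeasurable_condExp.aestronglyMeasurable).congr (hrec n hn).symm
  induction hn using Nat.decreasingInduction with
  | self =>
    rw [sumWhileBelow_of_le le_rfl, condExp_zero]
    exact (condExp_max_sub_eq_zero (m := 𝔽 N) hterm).symm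
  | of_succ k hk ih =>
    have hstep : μ[sumWhileBelow Y l a N k | 𝔽 (k + 1)] =ᵐ[μ]
        fun ω => max (l (k + 1) ω - Y (k + 1) ω) 0 := by
      filter_upwards [condExp_sumWhileBelow_succ hYm ham hY ha hl hk, ih, hrec k hk]
        with ω hcond hind hrecω
      rw [hcond, hind, ← indicator_lt_mul_sub_eq_max, hrecω]
      ring
    exact (condExp_condExp_of_le (𝔽.mono k.le_succ) (𝔽.le _)).symm.trans (condExp_congr_ae hstep)

end sumWhileBelow

end

theorem indicator_sum_condexp_eq_pos_part_condexp_general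
    {Ω : Type*} {m0 : MeasurableSpace Ω} (μ : Measure Ω) [IsProbabilityMeasure μ]
    (N : ℕ) (ℱ : ℕ → MeasurableSpace Ω) (hmono : Monotone ℱ) (hle : ∀ n, ℱ n ≤ m0)
    (Y v : ℕ → Ω → ℝ)
    (hYnn : ∀ n ω, 0 ≤ Y n ω) (hYint : ∀ n, Integrable (Y n) μ)
    (hYmeas : ∀ n, Measurable[ℱ n] (Y n))
    (hvint : ∀ n, Integrable (v n) μ)
    (hvmeas : ∀ k, Measurable[ℱ (k - 1)] (v k))
    (c : ℝ) (l : ℕ → Ω → ℝ)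
    (hlN1 : l (N + 1) = fun _ => 0)
    (hlN : l N = fun ω => c * v (N + 1) ω)
    (hlrec : ∀ n < N, l n =ᵐ[μ] fun ω =>
      c * v (n + 1) ω + (μ[fun ω' => max (l (n + 1) ω' - Y (n + 1) ω') 0 | ℱ n]) ω) :
    ∀ n ≤ N,
      (μ[fun ω => ∑ m ∈ Finset.Icc (n + 1) N,
          (Set.indicator {ω' | ∀ k ∈ Finset.Icc (n + 1) m, Y k ω' < l k ω'}
            (fun _ => (1 : ℝ)) ω) * (c * v (m + 1) ω - Y m ω) | ℱ n])
        =ᵐ[μ] (μ[fun ω => max (l (n + 1) ω - Y (n + 1) ω) 0 | ℱ n]) := by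
  have hterm : ∀ᵐ ω ∂μ, l (N + 1) ω ≤ Y (N + 1) ω := ae_of_all _ fun ω => by simp [hlN1, hYnn]
  have hrec : ∀ k < N, l (k + 1) =ᵐ[μ] fun ω =>
      c * v (k + 2) ω + μ[fun ω' => max (l (k + 2) ω' - Y (k + 2) ω') 0 | ℱ (k + 1)] ω := by
    intro k hk
    by_cases hk' : k + 1 < N
    · exact hlrec (k + 1) hk'
    · obtain rfl : N = k + 1 := by omega
      have h0 := condExp_max_sub_eq_zero (m := ℱ (k + 1)) hterm
      filter_upwards [h0] with ω hω
      simp [hlN, hω]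
  intro n hn
  exact condExp_sumWhileBelow_ae_eq (𝔽 := ⟨ℱ, hmono, hle⟩) (a := fun m ω => c * v (m + 1) ω)
    hYmeas (fun k => (hvmeas (k + 1)).const_mul c) hYint
    (fun k => (hvint (k + 1)).const_mul c) hrec hterm hn

/-- With the recursively defined control limits, for every `0 ≤ n ≤ N`:
`E(∑_{m=n+1}^{N} 1{B_{m,n+1}}·(c·v_{m+1} - Y_m) | F_n) = E([l_{n+1} - Y_{n+1}]⁺ | F_n)` a.s.,
where `B_{m,n+1} = {Y_k < l_k for all n+1 ≤ k ≤ m}` and `l_{N+1} = 0`. -/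
theorem indicator_sum_condexp_eq_pos_part_condexp
    {Ω : Type*} {m0 : MeasurableSpace Ω} (μ : Measure Ω) [IsProbabilityMeasure μ]
    (N : ℕ) (ℱ : ℕ → MeasurableSpace Ω) (hmono : Monotone ℱ) (hle : ∀ n, ℱ n ≤ m0)
    (Y v : ℕ → Ω → ℝ)
    (hYnn : ∀ n ω, 0 ≤ Y n ω) (hYint : ∀ n, Integrable (Y n) μ)
    (hYmeas : ∀ n, Measurable[ℱ n] (Y n))
    (hvnn : ∀ n ω, 0 ≤ v n ω) (hvint : ∀ n, Integrable (v n) μ)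
    (hvmeas : ∀ k, Measurable[ℱ (k - 1)] (v k))
    (c : ℝ) (hc : 0 < c) (l : ℕ → Ω → ℝ)
    (hlN1 : l (N + 1) = fun _ => 0)
    (hlN : l N = fun ω => c * v (N + 1) ω)
    (hlrec : ∀ n < N, l n =ᵐ[μ] fun ω =>
      c * v (n + 1) ω + (μ[fun ω' => max (l (n + 1) ω' - Y (n + 1) ω') 0 | ℱ n]) ω) :
    ∀ n ≤ N,
      (μ[fun ω => ∑ m ∈ Finset.Icc (n + 1) N,
          (Set.indicator {ω' | ∀ k ∈ Finset.Icc (n + 1) m, Y k ω' < l k ω'}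
            (fun _ => (1 : ℝ)) ω) * (c * v (m + 1) ω - Y m ω) | ℱ n])
        =ᵐ[μ] (μ[fun ω => max (l (n + 1) ω - Y (n + 1) ω) 0 | ℱ n]) :=
  indicator_sum_condexp_eq_pos_part_condexp_general μ N ℱ hmono hle Y v hYnn hYint hYmeas hvint
    hvmeas c l hlN1 hlN hlrec
end

section
/- Optimality of the recursively defined stopping rule for the linear criterion: define T* = min{1 ≤ n ≤ N+1 : Y_n ≥ l_n} with Y_{N+1} = Y_N and l_{N+1} = 0 (so T* ≤ N+1), and ξ_n = ∑_{k=1}^{n} (Y_{k-1} - c·v_k) with Y_0 = 0. Then for every stopping time T with values in {1,...,N+1}, E(ξ_T) ≥ E(ξ_{T*}). -/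
/-!
Put `M_n = ξ_n - (l_n - Y_n)⁺`. By the recursion for the control limits,
`E(M_{n+1} - M_n | F_n) = Y_n + (l_n - Y_n)⁺ - l_n = (Y_n - l_n)⁺ ≥ 0` for `n ≤ N`, so
`E ξ_T ≥ E M_T ≥ E M_1` for every stopping time `T` with values in `{1, …, N+1}`. Before `T*` the
drift `(Y_n - l_n)⁺` vanishes and at `T*` the correction `(l - Y)⁺` is zero, so
`E ξ_{T*} = E M_{T*} = E M_1`.
-/

open MeasureTheory Finset

theorem Finset.sum_Ico_ite_lt_sub {M : Type*} [AddCommGroup M] (f : ℕ → M) {a b t : ℕ}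
    (ht : t ∈ Icc a b) :
    ∑ n ∈ Ico a b, (if n < t then f (n + 1) - f n else 0) = f t - f a := by
  rw [mem_Icc] at ht
  rw [← sum_filter, ← sum_Ico_sub f ht.1]
  congr 1
  ext n
  simp only [mem_filter, mem_Ico]
  omega

section HittingTime

variable {Ω ι β : Type*} [ConditionallyCompleteLinearOrder ι] {u u' : ι → Ω → β} {s : Set β}
  {a b : ι} {ω : Ω}

theorem hittingBtwn_eq_sInf_of_exists (h : ∃ j ∈ Set.Icc a b, u j ω ∈ s) :
    hittingBtwn u s a b ω = sInf {n | a ≤ n ∧ n ≤ b ∧ u n ω ∈ s} := by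
  rw [hittingBtwn, if_pos h]
  congr 1
  ext
  simp [and_assoc]

theorem hittingBtwn_congr (h : ∀ j ∈ Set.Icc a b, u j ω = u' j ω) :
    hittingBtwn u s a b ω = hittingBtwn u' s a b ω := by
  have hs j (hj : j ∈ Set.Icc a b) : u j ω ∈ s ↔ u' j ω ∈ s := by rw [h j hj]
  have hset : Set.Icc a b ∩ {i | u i ω ∈ s} = Set.Icc a b ∩ {i | u' i ω ∈ s} := by
    ext j
    exact and_congr_right (hs j)
  rw [hittingBtwn, hittingBtwn, hset, exists_congr fun j => and_congr_right (hs j)]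

end HittingTime

section StoppingTimes

variable {Ω : Type*} {m0 : MeasurableSpace Ω} {μ : Measure Ω} {ℱ : ℕ → MeasurableSpace Ω}
  {f : ℕ → Ω → ℝ} {R : Ω → ℕ} {a b : ℕ}

theorem measurableSet_lt_of_measurableSet_le {m : MeasurableSpace Ω} {n : ℕ}
    (h : MeasurableSet[m] {ω | R ω ≤ n}) : MeasurableSet[m] {ω | n < R ω} := by
  simpa only [Set.compl_ofPred, not_le] using h.compl

theorem comp_eq_add_sum_indicator (f : ℕ → Ω → ℝ) (hR : ∀ ω, R ω ∈ Icc a b) :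
    (fun ω => f (R ω) ω)
      = fun ω => f a ω + ∑ n ∈ Ico a b, {ω | n < R ω}.indicator (f (n + 1) - f n) ω := by
  ext ω
  simp only [Set.indicator_apply, Set.mem_ofPred_eq, Pi.sub_apply,
    sum_Ico_ite_lt_sub (fun n => f n ω) (hR ω), add_sub_cancel]

theorem integrable_comp_of_mem_Icc (hab : a ≤ b) (hf : ∀ n ≤ b, Integrable (f n) μ)
    (hR : ∀ ω, R ω ∈ Icc a b) (hRmeas : ∀ n, MeasurableSet {ω | R ω ≤ n}) :
    Integrable (fun ω => f (R ω) ω) μ := by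
  rw [comp_eq_add_sum_indicator f hR]
  refine (hf a hab).add <| integrable_finsetSum _ fun n hn => ?_
  rw [mem_Ico] at hn
  exact ((hf (n + 1) hn.2).sub (hf n hn.2.le)).indicator
    (measurableSet_lt_of_measurableSet_le (hRmeas n))

theorem integral_comp_eq_add_sum_setIntegral_condExp [IsFiniteMeasure μ]
    (hle : ∀ n, ℱ n ≤ m0) (hab : a ≤ b) (hf : ∀ n ≤ b, Integrable (f n) μ)
    (hR : ∀ ω, R ω ∈ Icc a b)
    (hRstop : ∀ n, MeasurableSet[ℱ n] {ω | R ω ≤ n}) :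
    ∫ ω, f (R ω) ω ∂μ = ∫ ω, f a ω ∂μ
      + ∑ n ∈ Ico a b, ∫ ω in {ω | n < R ω}, (μ[f (n + 1) - f n | ℱ n]) ω ∂μ := by
  have hlt n := measurableSet_lt_of_measurableSet_le (hRstop n)
  have hinc n (hn : n ∈ Ico a b) : Integrable (f (n + 1) - f n) μ := by
    rw [mem_Ico] at hn
    exact (hf (n + 1) hn.2).sub (hf n hn.2.le)
  have hterm n (hn : n ∈ Ico a b) : Integrable ({ω | n < R ω}.indicator (f (n + 1) - f n)) μ :=
    (hinc n hn).indicator (hle n _ (hlt n))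
  rw [comp_eq_add_sum_indicator f hR, integral_add (hf a hab)
      (integrable_finsetSum _ hterm), integral_finsetSum _ hterm]
  congr 1
  refine sum_congr rfl fun n hn => ?_
  rw [integral_indicator (hle n _ (hlt n)), setIntegral_condExp (hle n) (hinc n hn) (hlt n)]

theorem integral_le_integral_comp_of_condExp_nonneg [IsFiniteMeasure μ]
    (hle : ∀ n, ℱ n ≤ m0) (hab : a ≤ b) (hf : ∀ n ≤ b, Integrable (f n) μ)
    (hR : ∀ ω, R ω ∈ Icc a b)
    (hRstop : ∀ n, MeasurableSet[ℱ n] {ω | R ω ≤ n})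
    (hdrift : ∀ n ∈ Ico a b, 0 ≤ᵐ[μ] μ[f (n + 1) - f n | ℱ n]) :
    ∫ ω, f a ω ∂μ ≤ ∫ ω, f (R ω) ω ∂μ := by
  rw [integral_comp_eq_add_sum_setIntegral_condExp hle hab hf hR hRstop]
  exact le_add_of_nonneg_right <| sum_nonneg fun n hn =>
    integral_nonneg_of_ae (ae_restrict_of_ae (hdrift n hn))

theorem integral_comp_eq_of_condExp_eq_zero [IsFiniteMeasure μ]
    (hle : ∀ n, ℱ n ≤ m0) (hab : a ≤ b) (hf : ∀ n ≤ b, Integrable (f n) μ)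
    (hR : ∀ ω, R ω ∈ Icc a b)
    (hRstop : ∀ n, MeasurableSet[ℱ n] {ω | R ω ≤ n})
    (hdrift : ∀ n ∈ Ico a b, ∀ᵐ ω ∂μ, n < R ω → (μ[f (n + 1) - f n | ℱ n]) ω = 0) :
    ∫ ω, f (R ω) ω ∂μ = ∫ ω, f a ω ∂μ := by
  rw [integral_comp_eq_add_sum_setIntegral_condExp hle hab hf hR hRstop, add_eq_left]
  exact sum_eq_zero fun n hn => setIntegral_eq_zero_of_ae_eq_zero (hdrift n hn)

theorem measurableSet_hittingBtwn_le (hmono : Monotone ℱ) (hle : ∀ n, ℱ n ≤ m0)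
    {u : ℕ → Ω → ℝ} (hu : ∀ n, Measurable[ℱ n] (u n)) {s : Set ℝ} (hs : MeasurableSet s)
    (a b n : ℕ) : MeasurableSet[ℱ n] {ω | hittingBtwn u s a b ω ≤ n} := by
  simpa using Adapted.isStoppingTime_hittingBtwn (f := ⟨ℱ, hmono, hle⟩) (n := a) (n' := b) hu hs n

theorem exists_measurable_ae_eq_of_le {g : ℕ → Ω → ℝ} {N : ℕ}
    (hg : ∀ n ≤ N, AEStronglyMeasurable[ℱ n] (g n) μ) :
    ∃ u : ℕ → Ω → ℝ, (∀ n, Measurable[ℱ n] (u n)) ∧ ∀ᵐ ω ∂μ, ∀ n ≤ N, u n ω = g n ω := by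
  classical
  refine ⟨fun n => if h : n ≤ N then (hg n h).mk (g n) else 0, fun n => ?_,
    ae_all_iff.2 fun n => ?_⟩
  · by_cases h : n ≤ N
    · simpa only [h, dite_true] using (hg n h).stronglyMeasurable_mk.measurable
    · simp only [h, dite_false]
      exact @measurable_const ℝ Ω _ (ℱ n) 0
  · by_cases h : n ≤ N
    · filter_upwards [(hg n h).ae_eq_mk] with ω hω _
      simp [h, hω]
    · exact ae_of_all _ fun _ h' => absurd h' h

theorem exists_stoppingTime_ae_eq_hittingBtwn (hmono : Monotone ℱ) (hle : ∀ n, ℱ n ≤ m0)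
    {g : ℕ → Ω → ℝ} {s : Set ℝ} (hs : MeasurableSet s) (hab : a ≤ b)
    (hg : ∀ n ≤ b, AEStronglyMeasurable[ℱ n] (g n) μ) :
    ∃ S : Ω → ℕ, (∀ n, MeasurableSet[ℱ n] {ω | S ω ≤ n}) ∧ (∀ ω, S ω ∈ Icc a b) ∧
      hittingBtwn g s a b =ᵐ[μ] S := by
  obtain ⟨u, hu, hug⟩ := exists_measurable_ae_eq_of_le (ℱ := ℱ) hg
  refine ⟨hittingBtwn u s a b, measurableSet_hittingBtwn_le hmono hle hu hs a b,
    fun ω => by simpa using hittingBtwn_mem_Icc hab ω, ?_⟩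
  filter_upwards [hug] with ω hω
  exact hittingBtwn_congr fun j hj => (hω j hj.2).symm

theorem condExp_add_posPart_sub_ae_eq [IsFiniteMeasure μ] {m : MeasurableSpace Ω} (hm : m ≤ m0)
    {x y w g : Ω → ℝ}
    (hy : Measurable[m] y) (hw : Measurable[m] w)
    (hyi : Integrable y μ) (hwi : Integrable w μ) (hgi : Integrable g μ)
    (hx : x =ᵐ[μ] fun ω => w ω + (μ[g | m]) ω) :
    μ[fun ω => y ω + max (x ω - y ω) 0 - w ω - g ω | m] =ᵐ[μ] fun ω => max (y ω - x ω) 0 := by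
  set A : Ω → ℝ := fun ω => y ω + max (w ω + (μ[g | m]) ω - y ω) 0 - w ω
  have hAm : StronglyMeasurable[m] A :=
    ((hy.add (((hw.add stronglyMeasurable_condExp.measurable).sub hy).max measurable_const)).sub
      hw).stronglyMeasurable
  have hAi : Integrable A μ := (hyi.add ((hwi.add integrable_condExp).sub hyi).pos_part).sub hwi
  calc μ[fun ω => y ω + max (x ω - y ω) 0 - w ω - g ω | m]
      =ᵐ[μ] μ[A - g | m] := condExp_congr_ae (by filter_upwards [hx] with ω h; simp [A, h])
    _ =ᵐ[μ] μ[A | m] - μ[g | m] := condExp_sub hAi hgi m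
    _ = A - μ[g | m] := by rw [condExp_of_stronglyMeasurable hm hAm hAi]
    _ =ᵐ[μ] fun ω => max (y ω - x ω) 0 := by
      filter_upwards [hx] with ω h
      simp only [Pi.sub_apply, A, h]
      grind

end StoppingTimes

section LinearCriterion

variable {Ω : Type*} {m0 : MeasurableSpace Ω} {μ : Measure Ω} {ℱ : ℕ → MeasurableSpace Ω}
  {Y v l : ℕ → Ω → ℝ} {c : ℝ} {N n : ℕ}

def cumulativeGain (Y v : ℕ → Ω → ℝ) (c : ℝ) (n : ℕ) (ω : Ω) : ℝ :=
  ∑ k ∈ Icc 1 n, (Y (k - 1) ω - c * v k ω)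

def compensatedGain (Y v l : ℕ → Ω → ℝ) (c : ℝ) (n : ℕ) (ω : Ω) : ℝ :=
  cumulativeGain Y v c n ω - max (l n ω - Y n ω) 0

noncomputable def controlLimitStep (μ : Measure Ω) (ℱ : ℕ → MeasurableSpace Ω)
    (Y v l : ℕ → Ω → ℝ) (c : ℝ) (n : ℕ) (ω : Ω) : ℝ :=
  c * v (n + 1) ω + (μ[fun ω' => max (l (n + 1) ω' - Y (n + 1) ω') 0 | ℱ n]) ω

theorem compensatedGain_succ_sub (n : ℕ) (ω : Ω) :
    compensatedGain Y v l c (n + 1) ω - compensatedGain Y v l c n ω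
      = Y n ω + max (l n ω - Y n ω) 0 - c * v (n + 1) ω
        - max (l (n + 1) ω - Y (n + 1) ω) 0 := by
  simp only [compensatedGain, cumulativeGain, sum_Icc_succ_top (by omega : 1 ≤ n + 1),
    Nat.add_sub_cancel]
  ring

theorem integrable_cumulativeGain (hY : ∀ n, Integrable (Y n) μ) (hv : ∀ n, Integrable (v n) μ)
    (n : ℕ) : Integrable (cumulativeGain Y v c n) μ :=
  integrable_finsetSum _ fun k _ => (hY (k - 1)).sub ((hv k).const_mul c)

theorem integrable_compensatedGain (hY : ∀ n, Integrable (Y n) μ) (hv : ∀ n, Integrable (v n) μ)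
    (hl : Integrable (l n) μ) : Integrable (compensatedGain Y v l c n) μ :=
  (integrable_cumulativeGain hY hv n).sub (hl.sub (hY n)).pos_part

theorem cumulativeGain_eq_compensatedGain {ω : Ω} (h : l n ω ≤ Y n ω) :
    cumulativeGain Y v c n ω = compensatedGain Y v l c n ω := by
  simp [compensatedGain, h]

theorem condExp_compensatedGain_sub_ae_eq [IsFiniteMeasure μ] (hle : ℱ n ≤ m0)
    (hYm : Measurable[ℱ n] (Y n)) (hvm : Measurable[ℱ n] (v (n + 1)))
    (hYi : Integrable (Y n) μ) (hYi' : Integrable (Y (n + 1)) μ)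
    (hvi : Integrable (v (n + 1)) μ) (hli : Integrable (l (n + 1)) μ)
    (hrec : l n =ᵐ[μ] controlLimitStep μ ℱ Y v l c n) :
    μ[compensatedGain Y v l c (n + 1) - compensatedGain Y v l c n | ℱ n]
      =ᵐ[μ] fun ω => max (Y n ω - l n ω) 0 := by
  rw [show compensatedGain Y v l c (n + 1) - compensatedGain Y v l c n = _ from
    funext (compensatedGain_succ_sub n)]
  exact condExp_add_posPart_sub_ae_eq hle hYm (hvm.const_mul c) hYi (hvi.const_mul c)
    (hli.sub hYi').pos_part hrec

theorem controlLimit_ae_eq_step_of_le (hY : ∀ ω, 0 ≤ Y (N + 1) ω)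
    (hlN1 : l (N + 1) = fun _ => 0) (hlN : l N = fun ω => c * v (N + 1) ω)
    (hlrec : ∀ n < N, l n =ᵐ[μ] controlLimitStep μ ℱ Y v l c n) :
    ∀ n ≤ N, l n =ᵐ[μ] controlLimitStep μ ℱ Y v l c n := by
  intro n hn
  rcases hn.lt_or_eq with hn | rfl
  · exact hlrec n hn
  · have hzero : (fun ω' => max (l (n + 1) ω' - Y (n + 1) ω') 0) = 0 := by
      funext ω
      simp [hlN1, hY ω]
    filter_upwards with ω
    simp [controlLimitStep, hzero, hlN]

theorem integrable_controlLimit (hv : ∀ n, Integrable (v n) μ) (hlN1 : l (N + 1) = fun _ => 0)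
    (hrec : ∀ n ≤ N, l n =ᵐ[μ] controlLimitStep μ ℱ Y v l c n) :
    ∀ n ≤ N + 1, Integrable (l n) μ := by
  intro n hn
  rcases hn.lt_or_eq with hn | rfl
  · exact (((hv _).const_mul c).add integrable_condExp).congr (hrec n (by omega)).symm
  · simp [hlN1]

theorem aestronglyMeasurable_controlLimit (hv : ∀ k, Measurable[ℱ (k - 1)] (v k))
    (hlN1 : l (N + 1) = fun _ => 0) (hrec : ∀ n ≤ N, l n =ᵐ[μ] controlLimitStep μ ℱ Y v l c n) :
    ∀ n ≤ N + 1, AEStronglyMeasurable[ℱ n] (l n) μ := by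
  intro n hn
  rcases hn.lt_or_eq with hn | rfl
  · exact ⟨_, ((hv (n + 1)).const_mul c).stronglyMeasurable.add stronglyMeasurable_condExp,
      hrec n (by omega)⟩
  · rw [hlN1]
    exact aestronglyMeasurable_const

theorem sInf_controlLimit_eq_hittingBtwn (hY : ∀ ω, 0 ≤ Y (N + 1) ω)
    (hlN1 : l (N + 1) = fun _ => 0) (ω : Ω) :
    sInf {n | 1 ≤ n ∧ n ≤ N + 1 ∧ l n ω ≤ Y n ω}
      = hittingBtwn (fun n ω => Y n ω - l n ω) (Set.Ici 0) 1 (N + 1) ω := by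
  rw [hittingBtwn_eq_sInf_of_exists ⟨N + 1, by simp, by simp [hlN1, hY]⟩]
  simp [sub_nonneg]

theorem controlLimit_sInf_le (hY : ∀ ω, 0 ≤ Y (N + 1) ω) (hlN1 : l (N + 1) = fun _ => 0)
    (ω : Ω) :
    l (sInf {n | 1 ≤ n ∧ n ≤ N + 1 ∧ l n ω ≤ Y n ω}) ω
      ≤ Y (sInf {n | 1 ≤ n ∧ n ≤ N + 1 ∧ l n ω ≤ Y n ω}) ω := by
  have hend : N + 1 ∈ {n | 1 ≤ n ∧ n ≤ N + 1 ∧ l n ω ≤ Y n ω} :=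
    ⟨le_add_self, le_rfl, by simp [hlN1, hY]⟩
  exact (Nat.sInf_mem ⟨_, hend⟩).2.2

/- The recursion pins `l` down only almost surely, so `T*` need not be a stopping time; the
argument runs on the a.e. equal hitting time of an adapted version of `Y - l`. -/
theorem integral_cumulativeGain_sInf_eq [IsFiniteMeasure μ] (hmono : Monotone ℱ)
    (hle : ∀ n, ℱ n ≤ m0) (hYm : ∀ n, Measurable[ℱ n] (Y n)) (hYi : ∀ n, Integrable (Y n) μ)
    (hY : ∀ ω, 0 ≤ Y (N + 1) ω) (hvi : ∀ n, Integrable (v n) μ) (hlN1 : l (N + 1) = fun _ => 0)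
    (hl : ∀ n ≤ N + 1, Integrable (l n) μ) (hlm : ∀ n ≤ N + 1, AEStronglyMeasurable[ℱ n] (l n) μ)
    (hdrift : ∀ n ≤ N, μ[compensatedGain Y v l c (n + 1) - compensatedGain Y v l c n | ℱ n]
      =ᵐ[μ] fun ω => max (Y n ω - l n ω) 0)
    {Tstar : Ω → ℕ} (hTstar : ∀ ω, Tstar ω = sInf {n | 1 ≤ n ∧ n ≤ N + 1 ∧ l n ω ≤ Y n ω}) :
    ∫ ω, cumulativeGain Y v c (Tstar ω) ω ∂μ = ∫ ω, compensatedGain Y v l c 1 ω ∂μ := by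
  obtain ⟨S, hSstop, hS, hHS⟩ := exists_stoppingTime_ae_eq_hittingBtwn (μ := μ)
    (g := fun n ω => Y n ω - l n ω) hmono hle (measurableSet_Ici (a := 0)) (by omega : 1 ≤ N + 1)
    fun n hn => (hYm n).aestronglyMeasurable.sub (hlm n hn)
  calc ∫ ω, cumulativeGain Y v c (Tstar ω) ω ∂μ
      = ∫ ω, compensatedGain Y v l c (S ω) ω ∂μ := by
        refine integral_congr_ae ?_
        filter_upwards [hHS] with ω hω
        rw [hTstar, cumulativeGain_eq_compensatedGain (controlLimit_sInf_le hY hlN1 ω),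
          sInf_controlLimit_eq_hittingBtwn hY hlN1, hω]
    _ = ∫ ω, compensatedGain Y v l c 1 ω ∂μ := by
        refine integral_comp_eq_of_condExp_eq_zero hle (by omega)
          (fun n hn => integrable_compensatedGain hYi hvi (hl n hn)) hS hSstop fun n hn => ?_
        rw [mem_Ico] at hn
        filter_upwards [hdrift n (by omega), hHS] with ω hd hω hlt
        have hbefore := notMem_of_lt_hittingBtwn (hω ▸ hlt) hn.1
        simp only [Set.mem_Ici, sub_nonneg, not_le] at hbefore
        rw [hd, max_eq_right (sub_nonpos.2 hbefore.le)]

theorem integral_compensatedGain_le_integral_cumulativeGain [IsFiniteMeasure μ]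
    (hle : ∀ n, ℱ n ≤ m0) (hYi : ∀ n, Integrable (Y n) μ) (hvi : ∀ n, Integrable (v n) μ)
    (hl : ∀ n ≤ N + 1, Integrable (l n) μ)
    (hdrift : ∀ n ≤ N,
      0 ≤ᵐ[μ] μ[compensatedGain Y v l c (n + 1) - compensatedGain Y v l c n | ℱ n])
    {T : Ω → ℕ} (hTstop : ∀ n, MeasurableSet[ℱ n] {ω | T ω ≤ n})
    (hT : ∀ ω, 1 ≤ T ω ∧ T ω ≤ N + 1) :
    ∫ ω, compensatedGain Y v l c 1 ω ∂μ ≤ ∫ ω, cumulativeGain Y v c (T ω) ω ∂μ := by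
  have hM n (hn : n ≤ N + 1) := integrable_compensatedGain (c := c) hYi hvi (hl n hn)
  have hTIcc ω : T ω ∈ Icc 1 (N + 1) := mem_Icc.2 (hT ω)
  have hTm n : MeasurableSet {ω | T ω ≤ n} := hle n _ (hTstop n)
  calc ∫ ω, compensatedGain Y v l c 1 ω ∂μ
      ≤ ∫ ω, compensatedGain Y v l c (T ω) ω ∂μ :=
        integral_le_integral_comp_of_condExp_nonneg hle (by omega) hM hTIcc hTstop fun n hn =>
          hdrift n (by rw [mem_Ico] at hn; omega)
    _ ≤ ∫ ω, cumulativeGain Y v c (T ω) ω ∂μ :=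
        integral_mono (integrable_comp_of_mem_Icc (by omega) hM hTIcc hTm)
          (integrable_comp_of_mem_Icc (by omega)
            (fun n _ => integrable_cumulativeGain hYi hvi n) hTIcc hTm)
          fun ω => sub_le_self _ (le_max_right _ _)

end LinearCriterion

theorem optimal_stopping_linear_criterion_general
    {Ω : Type*} {m0 : MeasurableSpace Ω} (μ : Measure Ω) [IsProbabilityMeasure μ]
    (N : ℕ) (ℱ : ℕ → MeasurableSpace Ω) (hmono : Monotone ℱ) (hle : ∀ n, ℱ n ≤ m0)
    (Y v : ℕ → Ω → ℝ)
    (hYnn : ∀ n ω, 0 ≤ Y n ω) (hYint : ∀ n, Integrable (Y n) μ)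
    (hYmeas : ∀ n, Measurable[ℱ n] (Y n))
    (hvint : ∀ n, Integrable (v n) μ)
    (hvmeas : ∀ k, Measurable[ℱ (k - 1)] (v k))
    (c : ℝ) (l : ℕ → Ω → ℝ)
    (hlN1 : l (N + 1) = fun _ => 0)
    (hlN : l N = fun ω => c * v (N + 1) ω)
    (hlrec : ∀ n < N, l n =ᵐ[μ] fun ω =>
      c * v (n + 1) ω + (μ[fun ω' => max (l (n + 1) ω' - Y (n + 1) ω') 0 | ℱ n]) ω)
    (Tstar : Ω → ℕ)
    (hTstar : ∀ ω, Tstar ω = sInf {n | 1 ≤ n ∧ n ≤ N + 1 ∧ l n ω ≤ Y n ω})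
    (T : Ω → ℕ)
    (hTstop : ∀ n, MeasurableSet[ℱ n] {ω | T ω ≤ n})
    (hT : ∀ ω, 1 ≤ T ω ∧ T ω ≤ N + 1) :
    ∫ ω, ∑ k ∈ Finset.Icc 1 (Tstar ω), (Y (k - 1) ω - c * v k ω) ∂μ
      ≤ ∫ ω, ∑ k ∈ Finset.Icc 1 (T ω), (Y (k - 1) ω - c * v k ω) ∂μ := by
  have hrec := controlLimit_ae_eq_step_of_le (hYnn (N + 1)) hlN1 hlN hlrec
  have hl := integrable_controlLimit hvint hlN1 hrec
  have hdrift n (hn : n ≤ N) := condExp_compensatedGain_sub_ae_eq (hle n) (hYmeas n)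
    (hvmeas (n + 1)) (hYint n) (hYint (n + 1)) (hvint (n + 1)) (hl (n + 1) (by omega)) (hrec n hn)
  calc _ = ∫ ω, compensatedGain Y v l c 1 ω ∂μ :=
        integral_cumulativeGain_sInf_eq hmono hle hYmeas hYint (hYnn (N + 1)) hvint hlN1 hl
          (aestronglyMeasurable_controlLimit hvmeas hlN1 hrec) hdrift hTstar
    _ ≤ _ := integral_compensatedGain_le_integral_cumulativeGain hle hYint hvint hl
        (fun n hn => (hdrift n hn).mono fun ω h => h ▸ le_max_right _ _) hTstop hT

/-- Optimality of the recursively defined stopping rule for the linear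
criterion: with `T* = min{1 ≤ n ≤ N+1 : Y_n ≥ l_n}` (where `Y_{N+1} = Y_N`, `l_{N+1} = 0`)
and `ξ_n = ∑_{k=1}^{n} (Y_{k-1} - c·v_k)` (`Y_0 = 0`), for every stopping time `T`
with values in `{1,...,N+1}`, `E(ξ_T) ≥ E(ξ_{T*})`. -/
theorem optimal_stopping_linear_criterion
    {Ω : Type*} {m0 : MeasurableSpace Ω} (μ : Measure Ω) [IsProbabilityMeasure μ]
    (N : ℕ) (ℱ : ℕ → MeasurableSpace Ω) (hmono : Monotone ℱ) (hle : ∀ n, ℱ n ≤ m0)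
    (Y v : ℕ → Ω → ℝ)
    (hY0 : Y 0 = fun _ => 0) (hYN1 : Y (N + 1) = Y N)
    (hYnn : ∀ n ω, 0 ≤ Y n ω) (hYint : ∀ n, Integrable (Y n) μ)
    (hYmeas : ∀ n, Measurable[ℱ n] (Y n))
    (hvnn : ∀ n ω, 0 ≤ v n ω) (hvint : ∀ n, Integrable (v n) μ)
    (hvmeas : ∀ k, Measurable[ℱ (k - 1)] (v k))
    (c : ℝ) (hc : 0 < c) (l : ℕ → Ω → ℝ)
    (hlN1 : l (N + 1) = fun _ => 0)
    (hlN : l N = fun ω => c * v (N + 1) ω)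
    (hlrec : ∀ n < N, l n =ᵐ[μ] fun ω =>
      c * v (n + 1) ω + (μ[fun ω' => max (l (n + 1) ω' - Y (n + 1) ω') 0 | ℱ n]) ω)
    (Tstar : Ω → ℕ)
    (hTstar : ∀ ω, Tstar ω = sInf {n | 1 ≤ n ∧ n ≤ N + 1 ∧ l n ω ≤ Y n ω})
    (T : Ω → ℕ)
    (hTstop : ∀ n, MeasurableSet[ℱ n] {ω | T ω ≤ n})
    (hT : ∀ ω, 1 ≤ T ω ∧ T ω ≤ N + 1) :
    ∫ ω, ∑ k ∈ Finset.Icc 1 (Tstar ω), (Y (k - 1) ω - c * v k ω) ∂μ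
      ≤ ∫ ω, ∑ k ∈ Finset.Icc 1 (T ω), (Y (k - 1) ω - c * v k ω) ∂μ :=
  optimal_stopping_linear_criterion_general μ N ℱ hmono hle Y v hYnn hYint hYmeas hvint hvmeas c l
    hlN1 hlN hlrec Tstar hTstar T hTstop hT
end

section
/- On the event {T* > n}, the conditional expectation of the future increments of ξ under the stopping rule T* satisfies E(ξ_{T*} - ξ_n | F_n)·1{T* > n} = (Y_n - l_n)·1{T* > n} < 0 almost surely on {T* > n}, for 1 ≤ n ≤ N. -/
/-!
Write `G_n = Y_n - l_n` and `ξ_{n+1} - ξ_n = Y_n - c v_{n+1}`. The recursion for the control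
limits becomes `G_n = (ξ_{n+1} - ξ_n) + E[min(G_{n+1}, 0) | F_n]`, and `T*` is the first entry
time of `G` into `[0, ∞)` after time `1`. On `{T* > n}` we have `T* > n + 1` exactly when
`G_{n+1} < 0`, so `1{T* > n+1} G_{n+1} = 1{T* > n} min(G_{n+1}, 0)`. Splitting
`ξ_{T*} - ξ_n = (ξ_{n+1} - ξ_n) + (ξ_{T*} - ξ_{n+1})` and using the tower property, backward
induction from the empty event `{T* > N + 1}` gives `E[1{T* > n} (ξ_{T*} - ξ_n) | F_n] =
1{T* > n} G_n`. Since `l` obeys its recursion only almost surely, the argument is run for an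
adapted version of `l`, which changes `T*` only on a null set.
-/

open MeasureTheory Finset

section FirstEntry

variable {Ω : Type*} {m0 : MeasurableSpace Ω} {μ : Measure Ω} {ℱ : Filtration ℕ m0}
  {ξ G : ℕ → Ω → ℝ} {s N n : ℕ}

lemma indicator_lt_sub_eq_add (τ : Ω → ℕ) (ξ : ℕ → Ω → ℝ) (n : ℕ) :
    {ω | n < τ ω}.indicator (fun ω => ξ (τ ω) ω - ξ n ω) =
      {ω | n < τ ω}.indicator (ξ (n + 1) - ξ n)
        + {ω | n + 1 < τ ω}.indicator (fun ω => ξ (τ ω) ω - ξ (n + 1) ω) := by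
  ext ω
  simp only [Pi.add_apply, Set.indicator, Set.mem_ofPred_eq, Pi.sub_apply]
  by_cases h : n + 1 < τ ω
  · simp [h, (Nat.lt_succ_self n).trans h]
  · by_cases h' : n < τ ω
    · simp [show τ ω = n + 1 by omega]
    · simp [h, h']

lemma indicator_lt_hittingBtwn_succ (hGN : ∀ ω, 0 ≤ G N ω) (hs : s ≤ n + 1) (hn : n < N) :
    {ω | n + 1 < hittingBtwn G (Set.Ici 0) s N ω}.indicator (G (n + 1)) =
      {ω | n < hittingBtwn G (Set.Ici 0) s N ω}.indicator (fun ω => min (G (n + 1) ω) 0) := by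
  ext ω
  simp only [Set.indicator, Set.mem_ofPred_eq]
  by_cases h : n + 1 < hittingBtwn G (Set.Ici 0) s N ω
  · have hneg : G (n + 1) ω < 0 := not_le.1 (notMem_of_lt_hittingBtwn h hs)
    simp [h, (Nat.lt_succ_self n).trans h, hneg.le]
  · by_cases h' : n < hittingBtwn G (Set.Ici 0) s N ω
    · have hτ : hittingBtwn G (Set.Ici 0) s N ω = n + 1 := by omega
      have hpos : 0 ≤ G (n + 1) ω := by
        simpa [hτ] using hittingBtwn_mem_set (u := G) (s := Set.Ici 0) (n := s) (m := N)
          (ω := ω) ⟨N, ⟨by omega, le_rfl⟩, hGN ω⟩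
      simp [h, h', hpos]
    · simp [h, h']

lemma measurableSet_lt_hittingBtwn (hG : Adapted ℱ G) (n : ℕ) :
    MeasurableSet[ℱ n] {ω | n < hittingBtwn G (Set.Ici 0) s N ω} := by
  simpa using
    (hG.isStoppingTime_hittingBtwn (n := s) (n' := N) measurableSet_Ici).measurableSet_gt n

lemma integrable_apply_hittingBtwn (hG : Adapted ℱ G) (hξint : ∀ n, Integrable (ξ n) μ) :
    Integrable (fun ω => ξ (hittingBtwn G (Set.Ici 0) s N ω) ω) μ :=
  integrable_stoppedValue ℕ (hG.isStoppingTime_hittingBtwn measurableSet_Ici) hξint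
    (N := N) (fun ω => WithTop.coe_le_coe.2 (hittingBtwn_le ω))

variable (ξ G s N) in
noncomputable def remainingIncrement (n : ℕ) : Ω → ℝ :=
  {ω | n < hittingBtwn G (Set.Ici 0) s N ω}.indicator
    (fun ω => ξ (hittingBtwn G (Set.Ici 0) s N ω) ω - ξ n ω)

lemma condExp_remainingIncrement_succ [IsFiniteMeasure μ] (hGint : ∀ n, Integrable (G n) μ)
    (hG : Adapted ℱ G) (hGN : ∀ ω, 0 ≤ G N ω) (hs : s ≤ n + 1) (hn : n < N)
    (ih : μ[remainingIncrement ξ G s N (n + 1) | ℱ (n + 1)] =ᵐ[μ]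
      {ω | n + 1 < hittingBtwn G (Set.Ici 0) s N ω}.indicator (G (n + 1))) :
    μ[remainingIncrement ξ G s N (n + 1) | ℱ n] =ᵐ[μ]
      {ω | n < hittingBtwn G (Set.Ici 0) s N ω}.indicator
        (μ[fun ω => min (G (n + 1) ω) 0 | ℱ n]) := calc
  _ =ᵐ[μ] μ[μ[remainingIncrement ξ G s N (n + 1) | ℱ (n + 1)] | ℱ n] :=
    (condExp_condExp_of_le (ℱ.mono n.le_succ) (ℱ.le (n + 1))).symm
  _ =ᵐ[μ] μ[{ω | n < hittingBtwn G (Set.Ici 0) s N ω}.indicator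
      (fun ω => min (G (n + 1) ω) 0) | ℱ n] := by
    rw [← indicator_lt_hittingBtwn_succ hGN hs hn]
    exact condExp_congr_ae ih
  _ =ᵐ[μ] _ :=
    condExp_indicator ((hGint (n + 1)).inf (integrable_zero _ _ μ))
      (measurableSet_lt_hittingBtwn hG n)

lemma condExp_remainingIncrement_step [IsFiniteMeasure μ]
    (hξ : Adapted ℱ fun n => ξ (n + 1) - ξ n) (hξint : ∀ n, Integrable (ξ n) μ)
    (hG : Adapted ℱ G) (hGint : ∀ n, Integrable (G n) μ) (hGN : ∀ ω, 0 ≤ G N ω)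
    (hrec : G n =ᵐ[μ] ξ (n + 1) - ξ n + μ[fun ω => min (G (n + 1) ω) 0 | ℱ n])
    (hs : s ≤ n + 1) (hn : n < N)
    (ih : μ[remainingIncrement ξ G s N (n + 1) | ℱ (n + 1)] =ᵐ[μ]
      {ω | n + 1 < hittingBtwn G (Set.Ici 0) s N ω}.indicator (G (n + 1))) :
    μ[remainingIncrement ξ G s N n | ℱ n] =ᵐ[μ]
      {ω | n < hittingBtwn G (Set.Ici 0) s N ω}.indicator (G n) := by
  set A := {ω | n < hittingBtwn G (Set.Ici 0) s N ω}
  have hAmeas : MeasurableSet[ℱ n] A := measurableSet_lt_hittingBtwn hG n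
  have hincr_int : Integrable (A.indicator (ξ (n + 1) - ξ n)) μ :=
    ((hξint (n + 1)).sub (hξint n)).indicator (ℱ.le n _ hAmeas)
  have hnext_int : Integrable (remainingIncrement ξ G s N (n + 1)) μ :=
    ((integrable_apply_hittingBtwn hG hξint).sub (hξint (n + 1))).indicator
      (ℱ.le _ _ (measurableSet_lt_hittingBtwn hG (n + 1)))
  calc μ[remainingIncrement ξ G s N n | ℱ n]
      =ᵐ[μ] μ[A.indicator (ξ (n + 1) - ξ n) | ℱ n]
        + μ[remainingIncrement ξ G s N (n + 1) | ℱ n] := by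
        rw [remainingIncrement, indicator_lt_sub_eq_add]
        exact condExp_add hincr_int hnext_int _
    _ =ᵐ[μ] A.indicator (ξ (n + 1) - ξ n)
        + A.indicator (μ[fun ω => min (G (n + 1) ω) 0 | ℱ n]) := by
        rw [condExp_of_stronglyMeasurable (ℱ.le n)
          ((hξ n).indicator hAmeas).stronglyMeasurable hincr_int]
        exact (condExp_remainingIncrement_succ hGint hG hGN hs hn ih).add_left
    _ =ᵐ[μ] A.indicator (G n) := by
        rw [← Set.indicator_add']
        exact hrec.symm.indicator

lemma condExp_remainingIncrement [IsFiniteMeasure μ]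
    (hξ : Adapted ℱ fun n => ξ (n + 1) - ξ n) (hξint : ∀ n, Integrable (ξ n) μ)
    (hG : Adapted ℱ G) (hGint : ∀ n, Integrable (G n) μ) (hGN : ∀ ω, 0 ≤ G N ω)
    (hrec : ∀ n < N, G n =ᵐ[μ] ξ (n + 1) - ξ n + μ[fun ω => min (G (n + 1) ω) 0 | ℱ n])
    (hs : s ≤ n + 1) (hn : n ≤ N) :
    μ[remainingIncrement ξ G s N n | ℱ n] =ᵐ[μ]
      {ω | n < hittingBtwn G (Set.Ici 0) s N ω}.indicator (G n) := by
  induction hn using Nat.decreasingInduction with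
  | self =>
    have hempty : {ω | N < hittingBtwn G (Set.Ici 0) s N ω} = ∅ := by
      ext ω
      simpa using hittingBtwn_le ω
    simp [remainingIncrement, hempty]
  | of_succ k hk ih =>
    exact condExp_remainingIncrement_step hξ hξint hG hGint hGN (hrec k hk) hs hk (ih (by omega))

lemma ae_condExp_apply_hittingBtwn_sub_eq [IsFiniteMeasure μ]
    (hξ : Adapted ℱ fun n => ξ (n + 1) - ξ n) (hξint : ∀ n, Integrable (ξ n) μ)
    (hG : Adapted ℱ G) (hGint : ∀ n, Integrable (G n) μ) (hGN : ∀ ω, 0 ≤ G N ω)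
    (hrec : ∀ n < N, G n =ᵐ[μ] ξ (n + 1) - ξ n + μ[fun ω => min (G (n + 1) ω) 0 | ℱ n])
    (hs : s ≤ n + 1) (hn : n ≤ N) :
    ∀ᵐ ω ∂μ, n < hittingBtwn G (Set.Ici 0) s N ω →
      μ[fun ω => ξ (hittingBtwn G (Set.Ici 0) s N ω) ω - ξ n ω | ℱ n] ω = G n ω := by
  have hint : Integrable (fun ω => ξ (hittingBtwn G (Set.Ici 0) s N ω) ω - ξ n ω) μ :=
    (integrable_apply_hittingBtwn hG hξint).sub (hξint n)
  filter_upwards [condExp_remainingIncrement hξ hξint hG hGint hGN hrec hs hn,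
    condExp_indicator hint (measurableSet_lt_hittingBtwn hG n)] with ω hrem hind hω
  rw [remainingIncrement, hind] at hrem
  simpa [Set.indicator, hω] using hrem

end FirstEntry

section ControlLimits

variable {Ω : Type*} {m0 : MeasurableSpace Ω} {μ : Measure Ω} {Y v l : ℕ → Ω → ℝ} {c : ℝ}
  {N : ℕ}

def gainProcess (Y v : ℕ → Ω → ℝ) (c : ℝ) (n : ℕ) (ω : Ω) : ℝ :=
  ∑ k ∈ Icc 1 n, (Y (k - 1) ω - c * v k ω)

lemma gainProcess_succ_sub (n : ℕ) :
    gainProcess Y v c (n + 1) - gainProcess Y v c n = fun ω => Y n ω - c * v (n + 1) ω := by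
  ext ω
  simp [gainProcess, sum_Icc_succ_top (Nat.le_add_left 1 n)]

lemma integrable_gainProcess (hYint : ∀ n, Integrable (Y n) μ) (hvint : ∀ n, Integrable (v n) μ)
    (n : ℕ) : Integrable (gainProcess Y v c n) μ :=
  integrable_finsetSum _ fun k _ => (hYint _).sub ((hvint k).const_mul c)

lemma adapted_gainProcess_succ_sub {ℱ : Filtration ℕ m0} (hYmeas : Adapted ℱ Y)
    (hvmeas : ∀ k, Measurable[ℱ (k - 1)] (v k)) :
    Adapted ℱ fun n => gainProcess Y v c (n + 1) - gainProcess Y v c n := fun n => by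
  simp only [gainProcess_succ_sub]
  exact (hYmeas n).sub ((hvmeas (n + 1)).const_mul c)

lemma controlLimit_ae_eq_of_le {ℱ : ℕ → MeasurableSpace Ω} (hYN1 : ∀ ω, 0 ≤ Y (N + 1) ω)
    (hlN1 : l (N + 1) = fun _ => 0) (hlN : l N = fun ω => c * v (N + 1) ω)
    (hlrec : ∀ n < N, l n =ᵐ[μ] fun ω =>
      c * v (n + 1) ω + (μ[fun ω' => max (l (n + 1) ω' - Y (n + 1) ω') 0 | ℱ n]) ω) :
    ∀ n ≤ N, l n =ᵐ[μ] fun ω =>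
      c * v (n + 1) ω + (μ[fun ω' => max (l (n + 1) ω' - Y (n + 1) ω') 0 | ℱ n]) ω := by
  intro n hn
  rcases hn.lt_or_eq with hn | rfl
  · exact hlrec n hn
  · have hzero : (fun ω' => max (l (n + 1) ω' - Y (n + 1) ω') 0) = 0 := by
      ext ω
      simp [hlN1, hYN1 ω]
    simp [hlN, hzero]

lemma exists_adapted_ae_eq_controlLimit {ℱ : Filtration ℕ m0} (hvint : ∀ n, Integrable (v n) μ)
    (hvmeas : ∀ k, Measurable[ℱ (k - 1)] (v k)) (hlN1 : l (N + 1) = fun _ => 0)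
    (hrec : ∀ n ≤ N, l n =ᵐ[μ] fun ω =>
      c * v (n + 1) ω + (μ[fun ω' => max (l (n + 1) ω' - Y (n + 1) ω') 0 | ℱ n]) ω) :
    ∃ l' : ℕ → Ω → ℝ, Adapted ℱ l' ∧ (∀ n, Integrable (l' n) μ) ∧ l' (N + 1) = 0 ∧
      ∀ n ≤ N + 1, l' n =ᵐ[μ] l n := by
  classical
  refine ⟨fun n => if n ≤ N then fun ω =>
      c * v (n + 1) ω + (μ[fun ω' => max (l (n + 1) ω' - Y (n + 1) ω') 0 | ℱ n]) ω else 0,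
    fun n => ?_, fun n => ?_, by simp, fun n hn => ?_⟩
  · dsimp only
    split_ifs
    · exact ((hvmeas (n + 1)).const_mul c).add stronglyMeasurable_condExp.measurable
    · exact measurable_const
  · dsimp only
    split_ifs
    · exact ((hvint (n + 1)).const_mul c).add integrable_condExp
    · exact integrable_zero _ _ μ
  · rcases hn.lt_or_eq with hn | rfl
    · simpa [Nat.le_of_lt_succ hn] using (hrec n (Nat.le_of_lt_succ hn)).symm
    · simp only [if_false, not_le.2 (Nat.lt_succ_self N), hlN1]
      rfl

lemma sub_controlLimit_ae_eq_rec {ℱ : ℕ → MeasurableSpace Ω} {l' : ℕ → Ω → ℝ}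
    (hl' : ∀ n ≤ N + 1, l' n =ᵐ[μ] l n)
    (hrec : ∀ n ≤ N, l n =ᵐ[μ] fun ω =>
      c * v (n + 1) ω + (μ[fun ω' => max (l (n + 1) ω' - Y (n + 1) ω') 0 | ℱ n]) ω) :
    ∀ n < N + 1, (fun ω => Y n ω - l' n ω) =ᵐ[μ] gainProcess Y v c (n + 1) - gainProcess Y v c n
      + μ[fun ω => min (Y (n + 1) ω - l' (n + 1) ω) 0 | ℱ n] := by
  intro n hn
  have hnext : μ[fun ω => min (Y (n + 1) ω - l' (n + 1) ω) 0 | ℱ n] =ᵐ[μ]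
      -μ[fun ω => max (l (n + 1) ω - Y (n + 1) ω) 0 | ℱ n] := calc
    _ =ᵐ[μ] μ[-fun ω => max (l (n + 1) ω - Y (n + 1) ω) 0 | ℱ n] := by
      refine condExp_congr_ae ?_
      filter_upwards [hl' (n + 1) hn] with ω hω
      simp only [Pi.neg_apply, hω]
      grind
    _ =ᵐ[μ] _ := condExp_neg _ _
  filter_upwards [hl' n hn.le, hrec n (Nat.le_of_lt_succ hn), hnext] with ω hl'n hln hnextω
  simp only [Pi.add_apply, gainProcess_succ_sub, hl'n, hln, hnextω, Pi.neg_apply]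
  ring

lemma ae_eq_hittingBtwn_sub {l' : ℕ → Ω → ℝ} (hYN1 : ∀ ω, 0 ≤ Y (N + 1) ω)
    (hlN1 : l (N + 1) = fun _ => 0) (hl' : ∀ n ≤ N + 1, l' n =ᵐ[μ] l n) {Tstar : Ω → ℕ}
    (hTstar : ∀ ω, Tstar ω = sInf {n | 1 ≤ n ∧ n ≤ N + 1 ∧ l n ω ≤ Y n ω}) :
    Tstar =ᵐ[μ] hittingBtwn (fun n ω => Y n ω - l' n ω) (Set.Ici 0) 1 (N + 1) := by
  have hall : ∀ᵐ ω ∂μ, ∀ n ≤ N + 1, l' n ω = l n ω := by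
    simp only [ae_all_iff, Filter.eventually_imp_distrib_left]
    exact hl'
  filter_upwards [hall] with ω hω
  have hhit : ∃ j ∈ Set.Icc 1 (N + 1), Y j ω - l' j ω ∈ Set.Ici 0 :=
    ⟨N + 1, ⟨le_add_self, le_rfl⟩, by simp [hω (N + 1) le_rfl, hlN1, hYN1 ω]⟩
  rw [hTstar, hittingBtwn, if_pos hhit]
  congr 1
  ext n
  simp only [Set.mem_ofPred_eq, Set.mem_inter_iff, Set.mem_Icc, Set.mem_Ici, sub_nonneg]
  constructor
  · rintro ⟨h1, h2, h3⟩
    exact ⟨⟨h1, h2⟩, by rwa [hω n h2]⟩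
  · rintro ⟨⟨h1, h2⟩, h3⟩
    exact ⟨h1, h2, by rwa [← hω n h2]⟩

end ControlLimits

theorem condexp_future_increments_Tstar_general
    {Ω : Type*} {m0 : MeasurableSpace Ω} (μ : Measure Ω) [IsProbabilityMeasure μ]
    (N : ℕ) (ℱ : ℕ → MeasurableSpace Ω) (hmono : Monotone ℱ) (hle : ∀ n, ℱ n ≤ m0)
    (Y v : ℕ → Ω → ℝ)
    (hYnn : ∀ n ω, 0 ≤ Y n ω) (hYint : ∀ n, Integrable (Y n) μ)
    (hYmeas : ∀ n, Measurable[ℱ n] (Y n))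
    (hvint : ∀ n, Integrable (v n) μ)
    (hvmeas : ∀ k, Measurable[ℱ (k - 1)] (v k))
    (c : ℝ) (l : ℕ → Ω → ℝ)
    (hlN1 : l (N + 1) = fun _ => 0)
    (hlN : l N = fun ω => c * v (N + 1) ω)
    (hlrec : ∀ n < N, l n =ᵐ[μ] fun ω =>
      c * v (n + 1) ω + (μ[fun ω' => max (l (n + 1) ω' - Y (n + 1) ω') 0 | ℱ n]) ω)
    (Tstar : Ω → ℕ)
    (hTstar : ∀ ω, Tstar ω = sInf {n | 1 ≤ n ∧ n ≤ N + 1 ∧ l n ω ≤ Y n ω}) :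
    ∀ n, 1 ≤ n → n ≤ N →
      ∀ᵐ ω ∂μ, n < Tstar ω →
        ((μ[fun ω' => (∑ k ∈ Finset.Icc 1 (Tstar ω'), (Y (k - 1) ω' - c * v k ω'))
              - ∑ k ∈ Finset.Icc 1 n, (Y (k - 1) ω' - c * v k ω') | ℱ n]) ω
            = Y n ω - l n ω
          ∧ Y n ω - l n ω < 0) := by
  intro n hn1 hnN
  let 𝔽 : Filtration ℕ m0 := ⟨ℱ, hmono, hle⟩
  have hrec := controlLimit_ae_eq_of_le (hYnn (N + 1)) hlN1 hlN hlrec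
  obtain ⟨l', hl'meas, hl'int, hl'N1, hl'l⟩ :=
    exists_adapted_ae_eq_controlLimit (ℱ := 𝔽) hvint hvmeas hlN1 hrec
  have hstopped := ae_condExp_apply_hittingBtwn_sub_eq (ℱ := 𝔽) (s := 1) (n := n)
    (adapted_gainProcess_succ_sub hYmeas hvmeas) (integrable_gainProcess hYint hvint)
    (fun k => (hYmeas k).sub (hl'meas k)) (fun k => (hYint k).sub (hl'int k))
    (fun ω => by simp [hl'N1, hYnn]) (sub_controlLimit_ae_eq_rec hl'l hrec) le_add_self (by omega)
  set τ := hittingBtwn (fun k ω => Y k ω - l' k ω) (Set.Ici 0) 1 (N + 1)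
  have hT : Tstar =ᵐ[μ] τ := ae_eq_hittingBtwn_sub (hYnn (N + 1)) hlN1 hl'l hTstar
  have hce : μ[fun ω => gainProcess Y v c (Tstar ω) ω - gainProcess Y v c n ω | ℱ n] =ᵐ[μ]
      μ[fun ω => gainProcess Y v c (τ ω) ω - gainProcess Y v c n ω | ℱ n] :=
    condExp_congr_ae (hT.mono fun ω hω => by simp only [hω])
  filter_upwards [hstopped, hT, hl'l n (by omega), hce] with ω hstoppedω hTω hl'ω hceω hlt
  have hgap : Y n ω < l n ω :=
    not_le.1 fun hle => Nat.notMem_of_lt_sInf (hlt.trans_eq (hTstar ω)) ⟨hn1, by omega, hle⟩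
  refine ⟨?_, sub_neg.2 hgap⟩
  calc _ = _ := hceω
    _ = Y n ω - l' n ω := hstoppedω (hlt.trans_eq hTω)
    _ = Y n ω - l n ω := by rw [hl'ω]

/-- On the event `{T* > n}`, the conditional expectation of the future
increments of `ξ` under the stopping rule `T*` satisfies
`E(ξ_{T*} - ξ_n | F_n)·1{T* > n} = (Y_n - l_n)·1{T* > n} < 0` a.s. on `{T* > n}`,
for `1 ≤ n ≤ N`. -/
theorem condexp_future_increments_Tstar
    {Ω : Type*} {m0 : MeasurableSpace Ω} (μ : Measure Ω) [IsProbabilityMeasure μ]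
    (N : ℕ) (ℱ : ℕ → MeasurableSpace Ω) (hmono : Monotone ℱ) (hle : ∀ n, ℱ n ≤ m0)
    (Y v : ℕ → Ω → ℝ)
    (hY0 : Y 0 = fun _ => 0) (hYN1 : Y (N + 1) = Y N)
    (hYnn : ∀ n ω, 0 ≤ Y n ω) (hYint : ∀ n, Integrable (Y n) μ)
    (hYmeas : ∀ n, Measurable[ℱ n] (Y n))
    (hvnn : ∀ n ω, 0 ≤ v n ω) (hvint : ∀ n, Integrable (v n) μ)
    (hvmeas : ∀ k, Measurable[ℱ (k - 1)] (v k))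
    (c : ℝ) (hc : 0 < c) (l : ℕ → Ω → ℝ)
    (hlN1 : l (N + 1) = fun _ => 0)
    (hlN : l N = fun ω => c * v (N + 1) ω)
    (hlrec : ∀ n < N, l n =ᵐ[μ] fun ω =>
      c * v (n + 1) ω + (μ[fun ω' => max (l (n + 1) ω' - Y (n + 1) ω') 0 | ℱ n]) ω)
    (Tstar : Ω → ℕ)
    (hTstar : ∀ ω, Tstar ω = sInf {n | 1 ≤ n ∧ n ≤ N + 1 ∧ l n ω ≤ Y n ω}) :
    ∀ n, 1 ≤ n → n ≤ N →
      ∀ᵐ ω ∂μ, n < Tstar ω →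
        ((μ[fun ω' => (∑ k ∈ Finset.Icc 1 (Tstar ω'), (Y (k - 1) ω' - c * v k ω'))
              - ∑ k ∈ Finset.Icc 1 n, (Y (k - 1) ω' - c * v k ω') | ℱ n]) ω
            = Y n ω - l n ω
          ∧ Y n ω - l n ω < 0) :=
  condexp_future_increments_Tstar_general μ N ℱ hmono hle Y v hYnn hYint hYmeas hvint hvmeas c l
    hlN1 hlN hlrec Tstar hTstar
end

section
/- Value formula: with T* = min{1 ≤ n ≤ N+1 : Y_n ≥ l_n(c)} and the recursive control limits, E_0(∑_{m=1}^{N} (Y_m - c·v_{m+1})·1{T* ≥ m+1}) = E_0(c·v_1 - l_0(c)), where l_0(c) = c·v_1 + E([l_1(c) - Y_1]^+ | F_0). -/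
open MeasureTheory Finset

/-- Value formula: with `T* = min{1 ≤ n ≤ N+1 : Y_n ≥ l_n(c)}` and the
recursive control limits,
`E_0(∑_{m=1}^{N} (Y_m - c·v_{m+1})·1{T* ≥ m+1}) = E_0(c·v_1 - l_0(c))`. -/
theorem value_formula
    {Ω : Type*} {m0 : MeasurableSpace Ω} (μ : Measure Ω) [IsProbabilityMeasure μ]
    (N : ℕ) (hN : 1 ≤ N)
    (ℱ : ℕ → MeasurableSpace Ω) (hmono : Monotone ℱ) (hle : ∀ n, ℱ n ≤ m0)
    (Y v : ℕ → Ω → ℝ)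
    (hY0 : Y 0 = fun _ => 0) (hYN1 : Y (N + 1) = Y N)
    (hYnn : ∀ n ω, 0 ≤ Y n ω) (hYint : ∀ n, Integrable (Y n) μ)
    (hYmeas : ∀ n, Measurable[ℱ n] (Y n))
    (hvnn : ∀ n ω, 0 ≤ v n ω) (hvint : ∀ n, Integrable (v n) μ)
    (hvmeas : ∀ k, Measurable[ℱ (k - 1)] (v k))
    (c : ℝ) (hc : 0 < c) (l : ℕ → Ω → ℝ)
    (hlN1 : l (N + 1) = fun _ => 0)
    (hlN : l N = fun ω => c * v (N + 1) ω)
    (hlrec : ∀ n < N, l n =ᵐ[μ] fun ω =>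
      c * v (n + 1) ω + (μ[fun ω' => max (l (n + 1) ω' - Y (n + 1) ω') 0 | ℱ n]) ω)
    (Tstar : Ω → ℕ)
    (hTstar : ∀ ω, Tstar ω = sInf {n | 1 ≤ n ∧ n ≤ N + 1 ∧ l n ω ≤ Y n ω}) :
    ∫ ω, ∑ m ∈ Finset.Icc 1 N,
        (Y m ω - c * v (m + 1) ω) * (if m + 1 ≤ Tstar ω then (1 : ℝ) else 0) ∂μ
      = ∫ ω, (c * v 1 ω - l 0 ω) ∂μ := by
  classical
  -- the positive parts appearing in the recursion
  set g : ℕ → Ω → ℝ := fun n ω => max (l n ω - Y n ω) 0 with hg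
  -- a measurable modification of `l`
  set l' : ℕ → Ω → ℝ := fun n =>
    if n < N then (fun ω => c * v (n + 1) ω + (μ[g (n + 1)|ℱ n]) ω) else l n with hl'
  have hl'ge : ∀ n, N ≤ n → l' n = l n := by
    intro n hn
    simp only [hl', if_neg (by omega : ¬ n < N)]
  have hl'lt : ∀ n, n < N →
      l' n = fun ω => c * v (n + 1) ω + (μ[g (n + 1)|ℱ n]) ω := by
    intro n hn
    simp only [hl', if_pos hn]
  -- integrability of l
  have hlint : ∀ n, n ≤ N + 1 → Integrable (l n) μ := by
    intro n hn
    rcases lt_or_ge n N with h | h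
    · refine Integrable.congr ?_ (hlrec n h).symm
      exact (((hvint (n + 1)).const_mul c).add integrable_condExp)
    · rcases eq_or_lt_of_le h with h' | h'
      · rw [← h', hlN]
        exact (hvint (N + 1)).const_mul c
      · have : n = N + 1 := by omega
        rw [this, hlN1]
        exact integrable_const 0
  have hgint : ∀ n, n ≤ N + 1 → Integrable (g n) μ := by
    intro n hn
    exact ((hlint n hn).sub (hYint n)).pos_part
  -- a.e. equality of l and l'
  have hl'eq : ∀ n, l n =ᵐ[μ] l' n := by
    intro n
    rcases lt_or_ge n N with h | h
    · rw [hl'lt n h]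
      exact hlrec n h
    · rw [hl'ge n h]
  -- measurability of l'
  have hl'meas : ∀ n, n ≤ N + 1 → Measurable[ℱ n] (l' n) := by
    intro n hn
    rcases lt_or_ge n N with h | h
    · rw [hl'lt n h]
      have hv' : Measurable[ℱ n] (v (n + 1)) := by
        have := hvmeas (n + 1)
        simpa using this
      exact (hv'.const_mul c).add stronglyMeasurable_condExp.measurable
    · rcases eq_or_lt_of_le h with h' | h'
      · subst h'
        rw [hl'ge N le_rfl, hlN]
        have hv' : Measurable[ℱ N] (v (N + 1)) := by
          have := hvmeas (N + 1)
          simpa using this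
        exact hv'.const_mul c
      · have hn1 : n = N + 1 := by omega
        rw [hl'ge n h, hn1, hlN1]
        exact measurable_const
  -- the events B' m = {Y_k < l'_k for 1 ≤ k ≤ m}
  set B : ℕ → Set Ω := fun m => {ω | ∀ k ∈ Finset.Icc 1 m, Y k ω < l' k ω} with hB
  have hBmeas : ∀ m, m ≤ N → MeasurableSet[ℱ m] (B m) := by
    intro m hm
    have : B m = ⋂ k ∈ Finset.Icc 1 m, {ω | Y k ω < l' k ω} := by
      ext ω; simp [hB]
    rw [this]
    refine MeasurableSet.biInter (Set.to_countable _) ?_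
    intro k hk
    have hkm : k ≤ m := (Finset.mem_Icc.mp hk).2
    have hYk : Measurable[ℱ m] (Y k) := (hYmeas k).mono (hmono hkm) le_rfl
    have hlk : Measurable[ℱ m] (l' k) :=
      (hl'meas k (by omega)).mono (hmono hkm) le_rfl
    exact measurableSet_lt hYk hlk
  have hBmeas0 : ∀ m, m ≤ N → MeasurableSet (B m) :=
    fun m hm => hle m _ (hBmeas m hm)
  -- characterization of the stopping time event
  have hTchar : ∀ m, m ≤ N → ∀ ω,
      (m + 1 ≤ Tstar ω ↔ ∀ k ∈ Finset.Icc 1 m, Y k ω < l k ω) := by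
    intro m hm ω
    rw [hTstar ω]
    have hSne : (N + 1) ∈ {n | 1 ≤ n ∧ n ≤ N + 1 ∧ l n ω ≤ Y n ω} := by
      refine ⟨by omega, le_rfl, ?_⟩
      rw [hlN1]
      exact hYnn _ _
    constructor
    · intro h k hk
      by_contra hle'
      push_neg at hle'
      have hk1 := (Finset.mem_Icc.mp hk).1
      have hk2 := (Finset.mem_Icc.mp hk).2
      have hkS : k ∈ {n | 1 ≤ n ∧ n ≤ N + 1 ∧ l n ω ≤ Y n ω} := ⟨hk1, by omega, hle'⟩
      have := Nat.sInf_le hkS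
      omega
    · intro h
      by_contra hlt
      push_neg at hlt
      have hmem := Nat.sInf_mem ⟨_, hSne⟩
      obtain ⟨h1, h2, h3⟩ := hmem
      have := h _ (Finset.mem_Icc.mpr ⟨h1, by omega⟩)
      linarith
  -- a.e. pointwise rewrite of the left-hand side
  have hEE : ∀ᵐ ω ∂μ, ∀ k ∈ Finset.Icc 1 N, l k ω = l' k ω := by
    rw [Filter.eventually_all_finset]
    intro k hk
    exact hl'eq k
  have hLHS : (∫ ω, ∑ m ∈ Finset.Icc 1 N,
        (Y m ω - c * v (m + 1) ω) * (if m + 1 ≤ Tstar ω then (1 : ℝ) else 0) ∂μ)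
      = ∫ ω, ∑ m ∈ Finset.Icc 1 N,
        (B m).indicator (fun ω => Y m ω - c * v (m + 1) ω) ω ∂μ := by
    refine integral_congr_ae ?_
    filter_upwards [hEE] with ω hω
    refine Finset.sum_congr rfl fun m hm => ?_
    have hm2 : m ≤ N := (Finset.mem_Icc.mp hm).2
    have hsub : ∀ k ∈ Finset.Icc 1 m, k ∈ Finset.Icc 1 N := by
      intro k hk
      have := Finset.mem_Icc.mp hk
      exact Finset.mem_Icc.mpr ⟨this.1, by omega⟩
    by_cases hBm : ω ∈ B m
    · have hT : m + 1 ≤ Tstar ω := by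
        refine (hTchar m hm2 ω).2 fun k hk => ?_
        rw [hω k (hsub k hk)]
        exact hBm k hk
      rw [Set.indicator_of_mem hBm, if_pos hT, mul_one]
    · have hT : ¬ (m + 1 ≤ Tstar ω) := by
        intro h
        refine hBm fun k hk => ?_
        rw [← hω k (hsub k hk)]
        exact (hTchar m hm2 ω).1 h k hk
      rw [Set.indicator_of_notMem hBm, if_neg hT, mul_zero]
  -- integrability of the indicator summands
  have hIint : ∀ m, 1 ≤ m → m ≤ N →
      Integrable ((B m).indicator (fun ω => Y m ω - c * v (m + 1) ω)) μ := by
    intro m h1 h2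
    exact ((hYint m).sub ((hvint (m + 1)).const_mul c)).indicator (hBmeas0 m h2)
  -- key pointwise identity
  have hP : ∀ n, 1 ≤ n → n ≤ N → ∀ ω,
      (B n).indicator (fun ω => Y n ω - l' n ω) ω
        = - (B (n - 1)).indicator (fun ω => max (l' n ω - Y n ω) 0) ω := by
    intro n h1 h2 ω
    have hsub : ∀ k ∈ Finset.Icc 1 (n - 1), k ∈ Finset.Icc 1 n := by
      intro k hk
      have := Finset.mem_Icc.mp hk
      exact Finset.mem_Icc.mpr ⟨this.1, by omega⟩
    by_cases hBn : ω ∈ B n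
    · have hBn1 : ω ∈ B (n - 1) := fun k hk => hBn k (hsub k hk)
      have hlt : Y n ω < l' n ω := hBn n (Finset.mem_Icc.mpr ⟨h1, le_rfl⟩)
      rw [Set.indicator_of_mem hBn, Set.indicator_of_mem hBn1,
        max_eq_left (by linarith)]
      ring
    · by_cases hBn1 : ω ∈ B (n - 1)
      · have hge : ¬ Y n ω < l' n ω := by
          intro h
          refine hBn fun k hk => ?_
          rcases eq_or_lt_of_le (Finset.mem_Icc.mp hk).2 with hk' | hk'
          · rw [hk']; exact h
          · exact hBn1 k (Finset.mem_Icc.mpr ⟨(Finset.mem_Icc.mp hk).1, by omega⟩)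
        push_neg at hge
        rw [Set.indicator_of_notMem hBn, Set.indicator_of_mem hBn1,
          max_eq_right (by linarith)]
        ring
      · rw [Set.indicator_of_notMem hBn, Set.indicator_of_notMem hBn1]
        ring
  -- tower-property step
  have hT : ∀ n, n < N →
      (∫ ω, (B n).indicator (fun ω => max (l' (n + 1) ω - Y (n + 1) ω) 0) ω ∂μ)
        = ∫ ω, (B n).indicator (fun ω => l' n ω - c * v (n + 1) ω) ω ∂μ := by
    intro n hn
    have hnN : n ≤ N := le_of_lt hn
    have hcond : (fun ω => l' n ω - c * v (n + 1) ω) = μ[g (n + 1)|ℱ n] := by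
      funext ω
      rw [hl'lt n hn]
      ring
    rw [hcond]
    have h1 : (∫ ω, (B n).indicator (μ[g (n + 1)|ℱ n]) ω ∂μ)
        = ∫ ω in B n, (μ[g (n + 1)|ℱ n]) ω ∂μ := integral_indicator (hBmeas0 n hnN)
    have h2 : (∫ ω in B n, (μ[g (n + 1)|ℱ n]) ω ∂μ) = ∫ ω in B n, g (n + 1) ω ∂μ :=
      setIntegral_condExp (hle n) (hgint (n + 1) (by omega)) (hBmeas n hnN)
    have h3 : (∫ ω in B n, g (n + 1) ω ∂μ)
        = ∫ ω, (B n).indicator (g (n + 1)) ω ∂μ :=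
      (integral_indicator (hBmeas0 n hnN)).symm
    rw [h1, h2, h3]
    refine integral_congr_ae ?_
    filter_upwards [hl'eq (n + 1)] with ω hω
    by_cases hBm : ω ∈ B n
    · rw [Set.indicator_of_mem hBm, Set.indicator_of_mem hBm]
      simp only [hg]
      rw [hω]
    · rw [Set.indicator_of_notMem hBm, Set.indicator_of_notMem hBm]
  -- main backward induction
  have main : ∀ j : ℕ, ∀ n, n = N - j → 1 ≤ n →
      (∑ m ∈ Finset.Icc n N,
          ∫ ω, (B m).indicator (fun ω => Y m ω - c * v (m + 1) ω) ω ∂μ)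
        = - ∫ ω, (B (n - 1)).indicator (fun ω => max (l' n ω - Y n ω) 0) ω ∂μ := by
    intro j
    induction j with
    | zero =>
      intro n hn h1
      have hnN : n = N := by omega
      rw [hnN]
      rw [Finset.Icc_self, Finset.sum_singleton]
      have hlN' : (fun ω => Y N ω - c * v (N + 1) ω) = fun ω => Y N ω - l' N ω := by
        funext ω
        rw [hl'ge N le_rfl, hlN]
      rw [hlN']
      rw [show (∫ ω, (B N).indicator (fun ω => Y N ω - l' N ω) ω ∂μ)
          = ∫ ω, - (B (N - 1)).indicator (fun ω => max (l' N ω - Y N ω) 0) ω ∂μ from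
        integral_congr_ae (Filter.Eventually.of_forall (hP N hN le_rfl))]
      rw [integral_neg]
    | succ j ih =>
      intro n hn h1
      have hjN : j + 1 ≤ N - 1 := by omega
      have hnlt : n < N := by omega
      have hn1 : n + 1 = N - j := by omega
      have hIH := ih (n + 1) hn1 (by omega)
      have hsplit : Finset.Icc n N = insert n (Finset.Icc (n + 1) N) := by
        ext x
        simp only [Finset.mem_Icc, Finset.mem_insert]
        omega
      rw [hsplit, Finset.sum_insert (by simp)]
      have hn1' : n + 1 - 1 = n := by omega
      rw [hIH, hn1']
      rw [hT n hnlt]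
      -- combine the two integrals
      have hint1 : Integrable ((B n).indicator (fun ω => Y n ω - c * v (n + 1) ω)) μ :=
        hIint n h1 (le_of_lt hnlt)
      have hint2 : Integrable ((B n).indicator (fun ω => l' n ω - c * v (n + 1) ω)) μ := by
        have hcond : (fun ω => l' n ω - c * v (n + 1) ω) = μ[g (n + 1)|ℱ n] := by
          funext ω
          rw [hl'lt n hnlt]
          ring
        rw [hcond]
        exact integrable_condExp.indicator (hBmeas0 n (le_of_lt hnlt))
      rw [← sub_eq_add_neg, ← integral_sub hint1 hint2]
      have hptwise : ∀ ω,
          (B n).indicator (fun ω => Y n ω - c * v (n + 1) ω) ω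
            - (B n).indicator (fun ω => l' n ω - c * v (n + 1) ω) ω
          = - (B (n - 1)).indicator (fun ω => max (l' n ω - Y n ω) 0) ω := by
        intro ω
        rw [← hP n h1 (le_of_lt hnlt) ω]
        by_cases hBm : ω ∈ B n
        · rw [Set.indicator_of_mem hBm, Set.indicator_of_mem hBm,
            Set.indicator_of_mem hBm]
          ring
        · rw [Set.indicator_of_notMem hBm, Set.indicator_of_notMem hBm,
            Set.indicator_of_notMem hBm]
          ring
      rw [integral_congr_ae (Filter.Eventually.of_forall hptwise), integral_neg]
  -- assemble
  rw [hLHS]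
  rw [integral_finset_sum _ (fun m hm =>
    hIint m (Finset.mem_Icc.mp hm).1 (Finset.mem_Icc.mp hm).2)]
  rw [main (N - 1) 1 (by omega) le_rfl]
  have hB0 : B 0 = Set.univ := by
    ext ω
    simp only [hB, Set.mem_setOf_eq, Set.mem_univ, iff_true, Finset.mem_Icc]
    omega
  rw [hB0]
  simp only [Set.indicator_univ]
  have h4 : (∫ ω, max (l' 1 ω - Y 1 ω) 0 ∂μ) = ∫ ω, g 1 ω ∂μ := by
    refine integral_congr_ae ?_
    filter_upwards [hl'eq 1] with ω hω
    simp only [hg]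
    rw [hω]
  rw [h4]
  have h5 : (∫ ω, g 1 ω ∂μ) = ∫ ω, (μ[g 1|ℱ 0]) ω ∂μ := (integral_condExp (hle 0)).symm
  rw [h5]
  rw [← integral_neg]
  refine integral_congr_ae ?_
  filter_upwards [hlrec 0 (by omega)] with ω hω
  rw [hω]
  ring
end
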